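/- arXiv:math/0506167 — 7 statements merged into one kernel-verified Lean document; each statement's English description precedes it below -/
import Mathlib

section
/- Let t ≥ 3 be an integer and let G be a finite simple graph containing no induced subgraph isomorphic to the star K_{1,t}. Then the b-chromatic number of G satisfies φ(G) ≤ (t-1)(χ(G)-1) + 1, where χ(G) is the chromatic number of G. -/
open SimpleGraph

variable {V : Type*} [Fintype V] [DecidableEq V]

/-- A proper coloring of `G` with exactly `b` colors is a *b-coloring* if each color class
contains a vertex adjacent to at least one vertex of every other color class. -/
def IsBColoring (G : SimpleGraph V) (b : ℕ) (c : V → Fin b) : Prop :=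
  (∀ v w, G.Adj v w → c v ≠ c w) ∧
  ∀ i : Fin b, ∃ v, c v = i ∧ ∀ j : Fin b, j ≠ c v → ∃ w, G.Adj v w ∧ c w = j

/-- The b-chromatic number `φ(G)`: the largest `b` such that `G` admits a b-coloring
with `b` colors. -/
noncomputable def bChromaticNumber (G : SimpleGraph V) : ℕ :=
  sSup {b | ∃ c : V → Fin b, IsBColoring G b c}

/-- `G` is `K_{1,t}`-free: `G` contains no induced subgraph isomorphic to the star
`K_{1,t}` (graph embeddings are exactly induced subgraph containments). -/
def StarFree (t : ℕ) (G : SimpleGraph V) : Prop :=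
  IsEmpty (completeBipartiteGraph (Fin 1) (Fin t) ↪g G)

lemma key_bound (G : SimpleGraph V) (t : ℕ) (ht : 3 ≤ t) (hfree : StarFree t G)
    {b n : ℕ} (c : V → Fin b) (hc : IsBColoring G b c) (f : G.Coloring (Fin n)) :
    b ≤ (t - 1) * (n - 1) + 1 := by
  rcases Nat.eq_zero_or_pos b with hb | hb
  · omega
  obtain ⟨v, hv, hvdom⟩ := hc.2 ⟨0, hb⟩
  classical
  let W : Fin b → V := fun j => if h : j ≠ c v then (hvdom j h).choose else v
  have hWadj : ∀ j, j ≠ c v → G.Adj v (W j) := by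
    intro j h; simp only [W, dif_pos h]; exact (hvdom j h).choose_spec.1
  have hWc : ∀ j, j ≠ c v → c (W j) = j := by
    intro j h; simp only [W, dif_pos h]; exact (hvdom j h).choose_spec.2
  set s : Finset (Fin b) := Finset.univ.filter (· ≠ c v) with hs
  have hmem : ∀ j, j ∈ s ↔ j ≠ c v := by intro j; simp [hs]
  have hscard : s.card = b - 1 := by
    have : s = Finset.univ.erase (c v) := by
      ext j; simp [hs, Finset.mem_erase]
    rw [this, Finset.card_erase_of_mem (Finset.mem_univ _), Finset.card_univ, Fintype.card_fin]
  have hmain : s.card ≤ (t - 1) * (Finset.univ.erase (f v)).card := by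
    apply Finset.card_le_mul_card_image_of_maps_to (f := fun j => f (W j))
    · intro j hj
      exact Finset.mem_erase.2 ⟨(f.valid (hWadj j ((hmem j).1 hj))).symm, Finset.mem_univ _⟩
    · intro m _
      by_contra hbig
      push_neg at hbig
      have hbig' : t ≤ (s.filter (fun j => f (W j) = m)).card := by omega
      obtain ⟨u, hus, hu⟩ := Finset.exists_subset_card_eq hbig'
      let g : Fin t ≃o u := u.orderIsoOfFin hu
      have hg : ∀ k : Fin t, (g k : Fin b) ∈ s ∧ f (W (g k)) = m := by
        intro k
        have := Finset.mem_filter.1 (hus (g k).2)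
        exact ⟨this.1, this.2⟩
      have hne : ∀ k, (g k : Fin b) ≠ c v := fun k => (hmem _).1 (hg k).1
      refine hfree.elim ?_
      refine ⟨⟨Sum.elim (fun _ => v) (fun k => W (g k)), ?_⟩, ?_⟩
      · rintro (x | x) (y | y) h
        · simp [Subsingleton.elim x y]
        · exact absurd h.symm (hWadj _ (hne y)).ne'
        · exact absurd h (hWadj _ (hne x)).ne'
        · simp only [Sum.elim_inr] at h
          have : (g x : Fin b) = (g y : Fin b) := by
            rw [← hWc _ (hne x), ← hWc _ (hne y), h]
          congr 1
          exact g.injective (Subtype.ext this)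
      · rintro (x | x) (y | y)
        · simp [completeBipartiteGraph]
          exact G.irrefl
        · simp [completeBipartiteGraph]
          exact hWadj _ (hne y)
        · simp [completeBipartiteGraph]
          exact (hWadj _ (hne x)).symm
        · simp only [Sum.elim_inr, completeBipartiteGraph]
          constructor
          · intro h
            exact absurd ((hg x).2.trans (hg y).2.symm) (f.valid h)
          · simp
  have hcard' : (Finset.univ.erase (f v)).card = n - 1 := by
    rw [Finset.card_erase_of_mem (Finset.mem_univ _), Finset.card_univ, Fintype.card_fin]
  rw [hcard', hscard] at hmain
  omega

/-- If `t ≥ 3` and `G` is `K_{1,t}`-free, then `φ(G) ≤ (t-1)(χ(G)-1) + 1`. -/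
theorem bChromaticNumber_le_of_starFree (G : SimpleGraph V) (t : ℕ) (ht : 3 ≤ t)
    (hfree : StarFree t G) :
    (bChromaticNumber G : ℕ∞) ≤ ((t - 1 : ℕ) : ℕ∞) * (G.chromaticNumber - 1) + 1 := by
  have hcol : G.Colorable (ENat.toNat G.chromaticNumber) :=
    G.colorable_chromaticNumber_of_fintype
  set n := ENat.toNat G.chromaticNumber with hn
  have hχ : G.chromaticNumber = (n : ℕ∞) := by
    rw [hn, ENat.coe_toNat]
    exact (chromaticNumber_ne_top_iff_exists (G := G)).2 ⟨_, hcol⟩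
  obtain ⟨f⟩ := hcol
  have hbound : bChromaticNumber G ≤ (t - 1) * (n - 1) + 1 := by
    apply csSup_le'
    rintro b ⟨c, hc⟩
    exact key_bound G t ht hfree c hc f
  calc (bChromaticNumber G : ℕ∞) ≤ (((t - 1) * (n - 1) + 1 : ℕ) : ℕ∞) := by
        exact_mod_cast hbound
    _ = ((t - 1 : ℕ) : ℕ∞) * (G.chromaticNumber - 1) + 1 := by
        rw [hχ]
        push_cast [ENat.coe_sub]
        rfl
end

section
/- Let G be a finite simple graph with clique partition number θ(G) = k and clique number ω = ω(G). Then the b-chromatic number of G satisfies φ(G) ≤ k²·ω/(2k-1); equivalently, (2k-1)·φ(G) ≤ k²·ω. -/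
open SimpleGraph
open Finset

variable {V : Type*} [Fintype V] [DecidableEq V]

/-- The clique partition number `θ(G)`: the minimum number of parts in a partition
of the vertex set of `G` into cliques (given as fibers of a map to `Fin k`). -/
noncomputable def cliquePartitionNumber (G : SimpleGraph V) : ℕ :=
  sInf {k | ∃ f : V → Fin k, ∀ i : Fin k, G.IsClique {v | f v = i}}

/-- If `θ(G) = k` and `ω(G) = ω`, then `(2k-1)·φ(G) ≤ k²·ω`. -/
theorem bChromaticNumber_le_of_cliquePartition (G : SimpleGraph V) (k : ℕ)
    (hθ : cliquePartitionNumber G = k) :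
    (2 * k - 1) * bChromaticNumber G ≤ k ^ 2 * G.cliqueNum := by
  classical
  set ω := G.cliqueNum with hω
  by_cases hne : {b | ∃ c : V → Fin b, IsBColoring G b c}.Nonempty
  case neg =>
    rw [bChromaticNumber, Set.not_nonempty_iff_eq_empty.mp hne, csSup_empty]
    simp
  have hbdd : BddAbove {b | ∃ c : V → Fin b, IsBColoring G b c} := by
    refine ⟨Fintype.card V, fun b hb => ?_⟩
    obtain ⟨c, hc⟩ := hb
    have hsurj : Function.Surjective c := fun i => (hc.2 i).imp fun v hv => hv.1
    simpa using Fintype.card_le_of_surjective c hsurj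
  have hdmem : bChromaticNumber G ∈ {b | ∃ c : V → Fin b, IsBColoring G b c} :=
    Nat.sSup_mem hne hbdd
  set d := bChromaticNumber G with hd
  by_cases hd0 : d = 0
  · rw [hd0]; simp
  obtain ⟨c, hcp, hcb⟩ := hdmem
  have hV : Nonempty V := by
    obtain ⟨v, -⟩ := hcb ⟨0, Nat.pos_of_ne_zero hd0⟩
    exact ⟨v⟩
  have hkmem : k ∈ {k | ∃ f : V → Fin k, ∀ i : Fin k, G.IsClique {v | f v = i}} := by
    rw [← hθ, cliquePartitionNumber]
    apply Nat.sInf_mem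
    refine ⟨Fintype.card V, (Fintype.equivFin V : V → Fin _), fun i => ?_⟩
    intro a ha b hb hab
    exact absurd ((Fintype.equivFin V).injective
      ((show _ = i from ha).trans (show _ = i from hb).symm)) hab
  obtain ⟨f, hf⟩ := hkmem
  have hk1 : 1 ≤ k := by
    rcases Nat.eq_zero_or_pos k with h | h
    · subst h; exact absurd (f (Classical.arbitrary V)).isLt (by simp)
    · exact h
  choose x hx1 hx2 using hcb
  have hxinj : Function.Injective x := fun a b h => by rw [← hx1 a, ← hx1 b, h]
  set Sing : Finset (Fin d) :=
    univ.filter (fun j => (univ.filter (fun v => c v = j)).card = 1) with hSing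
  set u := Sing.card with hu
  set n := Fintype.card V with hn
  -- each fiber of f is a clique of size ≤ ω
  have hfib : ∀ i : Fin k, (univ.filter (fun v => f v = i)).card ≤ ω := by
    intro i
    have hcl : G.IsClique (↑(univ.filter (fun v => f v = i)) : Set V) := by
      convert hf i using 2
      ext v; simp
    exact hcl.card_le_cliqueNum
  have hA : n ≤ k * ω := by
    have hfw := Finset.card_eq_sum_card_fiberwise
      (f := f) (s := (univ : Finset V)) (t := (univ : Finset (Fin k))) (by simp)
    rw [hn, ← Finset.card_univ, hfw]
    calc ∑ i : Fin k, (univ.filter (fun v => f v = i)).card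
        ≤ ∑ _i : Fin k, ω := Finset.sum_le_sum fun i _ => hfib i
      _ = k * ω := by simp [mul_comm]
  -- color classes
  have hclassmem : ∀ j : Fin d, x j ∈ univ.filter (fun v => c v = j) := by
    intro j; simp [hx1 j]
  have hB : 2 * d ≤ n + u := by
    have hfw := Finset.card_eq_sum_card_fiberwise
      (f := c) (s := (univ : Finset V)) (t := (univ : Finset (Fin d))) (by simp)
    have key : ∀ j : Fin d,
        2 ≤ (univ.filter (fun v => c v = j)).card + (if j ∈ Sing then 1 else 0) := by
      intro j
      by_cases hjs : j ∈ Sing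
      · have h1 : (univ.filter (fun v => c v = j)).card = 1 := by
          simpa [hSing] using hjs
        rw [h1, if_pos hjs]
      · have h1 : 1 ≤ (univ.filter (fun v => c v = j)).card :=
          Finset.card_pos.mpr ⟨x j, hclassmem j⟩
        have h2 : (univ.filter (fun v => c v = j)).card ≠ 1 := by
          simpa [hSing] using hjs
        simp only [hjs, if_false, add_zero]
        omega
    calc 2 * d = ∑ _j : Fin d, 2 := by simp [mul_comm]
      _ ≤ ∑ j : Fin d, ((univ.filter (fun v => c v = j)).card + (if j ∈ Sing then 1 else 0)) :=
          Finset.sum_le_sum fun j _ => key j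
      _ = n + u := by
          rw [Finset.sum_add_distrib, ← hfw, Finset.card_univ, ← hn]
          congr 1
          simp [hu]
  -- singleton color classes: the unique vertex is x j
  have hsing : ∀ j ∈ Sing, ∀ v, c v = j → v = x j := by
    intro j hj v hv
    simp only [hSing, mem_filter, mem_univ, true_and] at hj
    obtain ⟨a, ha⟩ := Finset.card_eq_one.mp hj
    have h1 : v ∈ univ.filter (fun w => c w = j) := by simp [hv]
    have h2 := hclassmem j
    rw [ha, Finset.mem_singleton] at h1 h2
    rw [h1, h2]
  have adjSing : ∀ j1 j2 : Fin d, j1 ≠ j2 → j2 ∈ Sing → G.Adj (x j1) (x j2) := by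
    intro j1 j2 hne12 h2
    have hj2ne : j2 ≠ c (x j1) := by rw [hx1]; exact fun h => hne12 h.symm
    obtain ⟨w, hw, hcw⟩ := hx2 j1 j2 hj2ne
    rwa [hsing j2 h2 w hcw] at hw
  -- the sets Sing ∪ J i give cliques
  have hT : ∀ i : Fin k,
      (Sing ∪ univ.filter (fun j => f (x j) = i)).card ≤ ω := by
    intro i
    have hcl : G.IsClique
        (↑((Sing ∪ univ.filter (fun j => f (x j) = i)).image x) : Set V) := by
      intro a ha b hb hab
      simp only [Finset.coe_image, Set.mem_image, Finset.mem_coe, Finset.mem_union,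
        Finset.mem_filter, Finset.mem_univ, true_and] at ha hb
      obtain ⟨j1, hj1, rfl⟩ := ha
      obtain ⟨j2, hj2, rfl⟩ := hb
      have hne12 : j1 ≠ j2 := fun h => hab (by rw [h])
      rcases hj2 with h2 | h2
      · exact adjSing j1 j2 hne12 h2
      · rcases hj1 with h1 | h1
        · exact (adjSing j2 j1 hne12.symm h1).symm
        · exact hf i (show f (x j1) = i from h1) (show f (x j2) = i from h2) hab
    have := hcl.card_le_cliqueNum
    rwa [Finset.card_image_of_injective _ hxinj] at this
  have hsum1 : ∑ i : Fin k, (univ.filter (fun j => f (x j) = i)).card = d := by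
    have hfw := Finset.card_eq_sum_card_fiberwise
      (f := fun j => f (x j)) (s := (univ : Finset (Fin d))) (t := (univ : Finset (Fin k)))
      (by simp)
    simpa using hfw.symm
  have hsum2 : ∑ i : Fin k, (Sing ∩ univ.filter (fun j => f (x j) = i)).card = u := by
    have hfw := Finset.card_eq_sum_card_fiberwise
      (f := fun j => f (x j)) (s := Sing) (t := (univ : Finset (Fin k))) (by simp)
    rw [hu, hfw]
    refine Finset.sum_congr rfl fun i _ => ?_
    congr 1
    ext j
    simp [and_comm]
  have hC : k * u + d ≤ k * ω + u := by
    have heq : ∀ i : Fin k,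
        (Sing ∪ univ.filter (fun j => f (x j) = i)).card
          + (Sing ∩ univ.filter (fun j => f (x j) = i)).card
          = u + (univ.filter (fun j => f (x j) = i)).card :=
      fun i => Finset.card_union_add_card_inter _ _
    have hsum : ∑ i : Fin k, ((Sing ∪ univ.filter (fun j => f (x j) = i)).card
          + (Sing ∩ univ.filter (fun j => f (x j) = i)).card) = k * u + d := by
      rw [Finset.sum_congr rfl fun i _ => heq i, Finset.sum_add_distrib, hsum1]
      simp [mul_comm]
    calc k * u + d = ∑ i : Fin k, ((Sing ∪ univ.filter (fun j => f (x j) = i)).card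
          + (Sing ∩ univ.filter (fun j => f (x j) = i)).card) := hsum.symm
      _ ≤ ∑ i : Fin k, (ω + (Sing ∩ univ.filter (fun j => f (x j) = i)).card) :=
          Finset.sum_le_sum fun i _ => by have := hT i; omega
      _ = k * ω + u := by rw [Finset.sum_add_distrib, hsum2]; simp [mul_comm]
  -- final arithmetic
  obtain ⟨m, rfl⟩ : ∃ m, k = m + 1 := ⟨k - 1, by omega⟩
  have hg : 2 * (m + 1) - 1 = 2 * m + 1 := by omega
  rw [hg]
  have hB' : 2 * d ≤ (m + 1) * ω + u := le_trans hB (by omega)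
  nlinarith [Nat.mul_le_mul_left m hB', hC, hB']
end

section
/- For any finite simple graph G, the b-chromatic number of G satisfies φ(G) ≤ χ(Ḡ)²·ω(G)/(2χ(Ḡ)-1), where Ḡ is the complement of G; equivalently, (2χ(Ḡ)-1)·φ(G) ≤ χ(Ḡ)²·ω(G). -/
open SimpleGraph

variable {V : Type*} [Fintype V] [DecidableEq V]

lemma key_bcoloring_bound (G : SimpleGraph V) {k b : ℕ} (g : Gᶜ.Coloring (Fin k))
    (c : V → Fin b) (h : IsBColoring G b c) :
    (2 * k - 1) * b ≤ k ^ 2 * G.cliqueNum := by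
  classical
  obtain ⟨hproper, hbv⟩ := h
  choose v hv1 hv2 using hbv
  have vinj : Function.Injective v := fun i j hij => by
    have : c (v i) = c (v j) := by rw [hij]
    rwa [hv1 i, hv1 j] at this
  set n := Fintype.card V with hn
  set ω := G.cliqueNum with hω
  -- vertices of the same `g`-color are adjacent in `G` (or equal)
  have same_color_adj : ∀ x y : V, x ≠ y → g x = g y → G.Adj x y := by
    intro x y hxy hg
    by_contra hadj
    exact g.valid ((G.compl_adj x y).mpr ⟨hxy, hadj⟩) hg
  -- S : colors whose class is a singleton
  set S : Finset (Fin b) := Finset.univ.filter (fun i => ∀ x, c x = i → x = v i) with hS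
  set s := S.card with hs
  have F4 : s ≤ b := by
    calc S.card ≤ (Finset.univ : Finset (Fin b)).card := Finset.card_le_card (by simp [hS])
    _ = b := by simp
  -- every b-vertex is adjacent to each singleton-class vertex of another color
  have adjS : ∀ i j : Fin b, j ∈ S → i ≠ j → G.Adj (v i) (v j) := by
    intro i j hjS hij
    obtain ⟨w, hw1, hw2⟩ := hv2 i j (by rw [hv1]; exact fun hh => hij hh.symm)
    have hw3 := (Finset.mem_filter.mp hjS).2 w hw2
    rwa [hw3] at hw1
  -- Fact 1 : 2 * b ≤ n + s
  have F1 : 2 * b ≤ n + s := by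
    have hfib : (Finset.univ : Finset V).card
        = ∑ i : Fin b, (Finset.univ.filter (fun x => c x = i)).card :=
      Finset.card_eq_sum_card_fiberwise (by simp)
    have hpt : ∀ i : Fin b,
        2 ≤ (Finset.univ.filter (fun x => c x = i)).card + (if i ∈ S then 1 else 0) := by
      intro i
      by_cases hi : i ∈ S
      · simp only [hi, if_true]
        have hvi : v i ∈ Finset.univ.filter (fun x => c x = i) := by simp [hv1]
        have : 1 ≤ (Finset.univ.filter (fun x => c x = i)).card :=
          Finset.card_pos.mpr ⟨v i, hvi⟩
        omega
      · simp only [hi, if_false, add_zero]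
        have : ¬ (∀ x, c x = i → x = v i) := by
          intro hc; exact hi (Finset.mem_filter.mpr ⟨Finset.mem_univ _, hc⟩)
        push_neg at this
        obtain ⟨x, hx1, hx2⟩ := this
        have hsub : ({x, v i} : Finset V) ⊆ Finset.univ.filter (fun y => c y = i) := by
          intro y hy
          rcases Finset.mem_insert.mp hy with rfl | hy
          · simp [hx1]
          · rw [Finset.mem_singleton.mp hy]; simp [hv1]
        have hcard : ({x, v i} : Finset V).card = 2 := Finset.card_pair hx2
        calc 2 = ({x, v i} : Finset V).card := hcard.symm
          _ ≤ _ := Finset.card_le_card hsub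
    have hsum := Finset.sum_le_sum (fun i (_ : i ∈ Finset.univ) => hpt i)
    rw [Finset.sum_add_distrib] at hsum
    have h2 : ∑ _i : Fin b, 2 = 2 * b := by simp [mul_comm]
    have h3 : (∑ i : Fin b, if i ∈ S then 1 else 0) = s := by
      rw [hs, Finset.card_eq_sum_ones S, Finset.sum_ite_mem]
      simp
    rw [h2, h3, ← hfib] at hsum
    simpa [hn, Finset.card_univ] using hsum
  -- Fact 3 : n ≤ k * ω
  have F3 : n ≤ k * ω := by
    have hfib : (Finset.univ : Finset V).card
        = ∑ t : Fin k, (Finset.univ.filter (fun x => g x = t)).card :=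
      Finset.card_eq_sum_card_fiberwise (by simp)
    have hcl : ∀ t : Fin k, (Finset.univ.filter (fun x => g x = t)).card ≤ ω := by
      intro t
      have hclique : G.IsClique (Finset.univ.filter (fun x => g x = t) : Finset V) := by
        intro x hx y hy hxy
        simp only [Finset.coe_filter, Set.mem_setOf_eq] at hx hy
        exact same_color_adj x y hxy (hx.2.trans hy.2.symm)
      exact IsClique.card_le_cliqueNum (tc := hclique)
    calc n = ∑ t : Fin k, (Finset.univ.filter (fun x => g x = t)).card := by
          rw [hn, ← Finset.card_univ, hfib]
      _ ≤ ∑ _t : Fin k, ω := Finset.sum_le_sum (fun t _ => hcl t)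
      _ = k * ω := by simp [mul_comm]
  -- Fact 2 : b + k * s ≤ k * ω + s
  set D : Fin k → Finset (Fin b) := fun t => Finset.univ.filter (fun i => g (v i) = t) with hD
  have F2 : b + k * s ≤ k * ω + s := by
    have cliqueT : ∀ t : Fin k, G.IsClique (((S ∪ D t).image v : Finset V) : Set V) := by
      intro t x hx y hy hxy
      simp only [Finset.coe_image, Set.mem_image, Finset.mem_coe] at hx hy
      obtain ⟨i, hi, rfl⟩ := hx
      obtain ⟨j, hj, rfl⟩ := hy
      have hij : i ≠ j := fun hh => hxy (by rw [hh])
      rcases Finset.mem_union.mp hj with hjS | hjD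
      · exact adjS i j hjS hij
      rcases Finset.mem_union.mp hi with hiS | hiD
      · exact (adjS j i hiS hij.symm).symm
      · have h1 : g (v i) = t := (Finset.mem_filter.mp hiD).2
        have h2 : g (v j) = t := (Finset.mem_filter.mp hjD).2
        exact same_color_adj _ _ hxy (h1.trans h2.symm)
    have hT : ∀ t : Fin k, (S ∪ D t).card ≤ ω := by
      intro t
      have hcard : ((S ∪ D t).image v).card = (S ∪ D t).card :=
        Finset.card_image_of_injective _ vinj
      calc (S ∪ D t).card = ((S ∪ D t).image v).card := hcard.symm
        _ ≤ ω := IsClique.card_le_cliqueNum (tc := cliqueT t)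
    have hsum1 : ∑ t : Fin k, (D t).card = b := by
      have := Finset.card_eq_sum_card_fiberwise
        (f := fun i : Fin b => g (v i)) (s := Finset.univ) (t := Finset.univ) (by simp)
      simpa [hD] using this.symm
    have hsum2 : ∑ t : Fin k, (S ∩ D t).card = s := by
      have h0 := Finset.card_eq_sum_card_fiberwise
        (f := fun i : Fin b => g (v i)) (s := S) (t := Finset.univ) (by simp)
      have heq : ∀ t : Fin k, S ∩ D t = S.filter (fun i => g (v i) = t) := by
        intro t; ext i; simp [hD, Finset.mem_filter, Finset.mem_inter, and_comm]
      rw [hs, h0]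
      exact Finset.sum_congr rfl (fun t _ => by rw [heq t])
    have hkey : ∀ t : Fin k, s + (D t).card ≤ ω + (S ∩ D t).card := by
      intro t
      have := Finset.card_union_add_card_inter S (D t)
      have h2 := hT t
      omega
    have := Finset.sum_le_sum (fun t (_ : t ∈ Finset.univ) => hkey t)
    rw [Finset.sum_add_distrib, Finset.sum_add_distrib, hsum1, hsum2] at this
    simp only [Finset.sum_const, Finset.card_univ, Fintype.card_fin, smul_eq_mul] at this
    omega
  -- final arithmetic
  rcases k with _ | m
  · -- k = 0 : from F2, b ≤ s; from F3, n = 0; from F1, 2b ≤ s ≤ b, so b = 0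
    simp only [Nat.zero_eq, Nat.mul_zero, Nat.zero_mul] at F2 F3 ⊢
    omega
  · have hco : 2 * (m + 1) - 1 = 2 * m + 1 := by omega
    rw [hco]
    nlinarith [Nat.mul_le_mul_left m F1, Nat.mul_le_mul_left m F3, F2, F1, F3]

/-- For any finite graph `G`, `(2χ(Ḡ) - 1)·φ(G) ≤ χ(Ḡ)²·ω(G)`, where `Ḡ` is
the complement of `G`. -/
theorem bChromaticNumber_le_chromaticNumber_compl_sq_mul_cliqueNum (G : SimpleGraph V) :
    (2 * Gᶜ.chromaticNumber - 1) * (bChromaticNumber G : ℕ∞) ≤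
      Gᶜ.chromaticNumber ^ 2 * (G.cliqueNum : ℕ∞) := by
  classical
  have hne : Gᶜ.chromaticNumber ≠ ⊤ :=
    chromaticNumber_ne_top_iff_exists.mpr ⟨_, Gᶜ.colorable_of_fintype⟩
  set k := (Gᶜ.chromaticNumber).toNat with hk
  have hχ : Gᶜ.chromaticNumber = (k : ℕ∞) := (ENat.coe_toNat hne).symm
  obtain ⟨g⟩ := Gᶜ.colorable_chromaticNumber_of_fintype
  have main : (2 * k - 1) * bChromaticNumber G ≤ k ^ 2 * G.cliqueNum := by
    rcases Set.eq_empty_or_nonempty {b | ∃ c : V → Fin b, IsBColoring G b c} with he | hne'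
    · rw [bChromaticNumber, he]
      simp [csSup_empty]
    · have hbdd : BddAbove {b | ∃ c : V → Fin b, IsBColoring G b c} := by
        refine ⟨Fintype.card V, fun x hx => ?_⟩
        obtain ⟨c, hc⟩ := hx
        choose v hv1 _ using hc.2
        have vinj : Function.Injective v := fun i j hij => by
          have : c (v i) = c (v j) := by rw [hij]
          rwa [hv1 i, hv1 j] at this
        simpa using Fintype.card_le_of_injective v vinj
      have hmem := Nat.sSup_mem hne' hbdd
      obtain ⟨c, hc⟩ := hmem
      exact key_bcoloring_bound G g c hc
  rw [hχ]
  calc (2 * (k : ℕ∞) - 1) * (bChromaticNumber G : ℕ∞)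
      = (((2 * k - 1) * bChromaticNumber G : ℕ) : ℕ∞) := by
        push_cast [ENat.coe_sub]
        ring
    _ ≤ ((k ^ 2 * G.cliqueNum : ℕ) : ℕ∞) := by exact_mod_cast main
    _ = (k : ℕ∞) ^ 2 * (G.cliqueNum : ℕ∞) := by push_cast; ring
end

section
/- Let G be a finite simple graph that is the complement of a bipartite graph. Then the b-chromatic number of G satisfies φ(G) ≤ 4ω(G)/3, where ω(G) is the clique number of G; equivalently, 3·φ(G) ≤ 4ω(G). -/
open SimpleGraph

variable {V : Type*} [Fintype V] [DecidableEq V]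

/-- If `G` is the complement of a bipartite graph (i.e. `Gᶜ` is 2-colorable),
then `3·φ(G) ≤ 4·ω(G)`. -/
theorem bChromaticNumber_le_of_compl_bipartite (G : SimpleGraph V)
    (hbip : Gᶜ.Colorable 2) :
    3 * bChromaticNumber G ≤ 4 * G.cliqueNum := by
  classical
  set n := bChromaticNumber G with hn
  rcases Nat.eq_zero_or_pos n with h0 | hpos
  · simp [h0]
  have hbdd : BddAbove {b | ∃ c : V → Fin b, IsBColoring G b c} := by
    refine ⟨Fintype.card V, fun b hb => ?_⟩
    obtain ⟨c, hc⟩ := hb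
    have hinj : Function.Injective (fun i : Fin b => (hc.2 i).choose) := by
      intro i j hij
      have hi := (hc.2 i).choose_spec.1
      have hj := (hc.2 j).choose_spec.1
      rw [← hi, ← hj]
      exact congrArg c hij
    simpa using Fintype.card_le_of_injective _ hinj
  have hmem : n ∈ {b | ∃ c : V → Fin b, IsBColoring G b c} := by
    apply Nat.sSup_mem _ hbdd
    by_contra hempty
    rw [Set.not_nonempty_iff_eq_empty] at hempty
    rw [hn, bChromaticNumber, hempty] at hpos
    simp at hpos
  obtain ⟨c, hc⟩ := hmem
  obtain ⟨f⟩ := hbip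
  -- same side of the bipartition ⇒ adjacent in G
  have hAdj : ∀ u w : V, u ≠ w → f u = f w → G.Adj u w := by
    intro u w hne hfeq
    by_contra hadj
    exact f.valid ((compl_adj G u w).mpr ⟨hne, hadj⟩) hfeq
  have hInd : ∀ u w, c u = c w → ¬ G.Adj u w := fun u w h hadj => hc.1 u w hadj h
  -- b-vertices
  let v : Fin n → V := fun i => (hc.2 i).choose
  have hv1 : ∀ i, c (v i) = i := fun i => (hc.2 i).choose_spec.1
  have hv2 : ∀ i, ∀ j : Fin n, j ≠ i → ∃ w, G.Adj (v i) w ∧ c w = j := by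
    intro i j hj
    exact (hc.2 i).choose_spec.2 j (by rw [hv1]; exact hj)
  have h01 : ∀ x : Fin 2, x = 0 ∨ x = 1 := by decide
  -- predicates
  let sing : V → Prop := fun u => ∀ w, c w = c u → w = u
  let inK3 : V → Prop := fun u => ((∃ i, v i = u) ∧ f u = 0) ∨ (sing u ∧ f u = 1)
  let inK4 : V → Prop := fun u => ((∃ i, v i = u) ∧ f u = 1) ∨ (sing u ∧ f u = 0)
  -- finsets
  let KA : Finset V := Finset.univ.filter (fun u => f u = 0)
  let KB : Finset V := Finset.univ.filter (fun u => f u = 1)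
  let K3 : Finset V := Finset.univ.filter inK3
  let K4 : Finset V := Finset.univ.filter inK4
  -- a b-vertex adjacent to a singleton of another class
  have hdom : ∀ (i : Fin n) (w : V), sing w → v i ≠ w → G.Adj (v i) w := by
    intro i w hw hne
    rcases eq_or_ne (c w) i with hcw | hcw
    · exact absurd (hw (v i) (by rw [hv1, hcw])) hne
    · obtain ⟨x, hx1, hx2⟩ := hv2 i (c w) hcw
      rwa [hw x hx2] at hx1
  have hcliqueA : G.IsClique (KA : Set V) := by
    intro u hu w hw hne
    simp only [KA, Finset.coe_filter, Set.mem_setOf_eq] at hu hw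
    exact hAdj u w hne (hu.2.trans hw.2.symm)
  have hcliqueB : G.IsClique (KB : Set V) := by
    intro u hu w hw hne
    simp only [KB, Finset.coe_filter, Set.mem_setOf_eq] at hu hw
    exact hAdj u w hne (hu.2.trans hw.2.symm)
  have hclique34 : ∀ (a b : Fin 2), a ≠ b →
      G.IsClique ((Finset.univ.filter (fun u =>
        ((∃ i, v i = u) ∧ f u = a) ∨ (sing u ∧ f u = b))) : Set V) := by
    intro a b hab u hu w hw hne
    simp only [Finset.coe_filter, Set.mem_setOf_eq] at hu hw
    rcases hu.2 with ⟨⟨i, hi⟩, hfu⟩ | ⟨hsu, hfu⟩ <;>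
      rcases hw.2 with ⟨⟨j, hj⟩, hfw⟩ | ⟨hsw, hfw⟩
    · exact hAdj u w hne (hfu.trans hfw.symm)
    · exact hi ▸ hdom i w hsw (hi ▸ hne)
    · exact (hj ▸ hdom j u hsu (hj ▸ hne.symm)).symm
    · exact hAdj u w hne (hfu.trans hfw.symm)
  have hclique3 : G.IsClique (K3 : Set V) := hclique34 0 1 (by decide)
  have hclique4 : G.IsClique (K4 : Set V) := hclique34 1 0 (by decide)
  -- fiberwise counting
  have classfib : ∀ K : Finset V, K.card = ∑ i : Fin n, (K.filter (fun u => c u = i)).card := by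
    intro K
    exact Finset.card_eq_sum_card_fiberwise (fun x _ => Finset.mem_univ (c x))
  have key : ∀ i : Fin n,
      3 ≤ (KA.filter (fun u => c u = i)).card + (KB.filter (fun u => c u = i)).card
        + (K3.filter (fun u => c u = i)).card + (K4.filter (fun u => c u = i)).card := by
    intro i
    have hmemA : ∀ (K : Finset V) (u : V), u ∈ K → c u = i →
        1 ≤ (K.filter (fun u => c u = i)).card := by
      intro K u hu hcu
      exact Finset.card_pos.mpr ⟨u, Finset.mem_filter.mpr ⟨hu, hcu⟩⟩
    by_cases hs : sing (v i)
    · -- singleton class: v i lies in K3, K4 and one of KA, KB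
      have h3 : v i ∈ K3 := by
        rcases h01 (f (v i)) with h | h
        · exact Finset.mem_filter.mpr ⟨Finset.mem_univ _, Or.inl ⟨⟨i, rfl⟩, h⟩⟩
        · exact Finset.mem_filter.mpr ⟨Finset.mem_univ _, Or.inr ⟨hs, h⟩⟩
      have h4 : v i ∈ K4 := by
        rcases h01 (f (v i)) with h | h
        · exact Finset.mem_filter.mpr ⟨Finset.mem_univ _, Or.inr ⟨hs, h⟩⟩
        · exact Finset.mem_filter.mpr ⟨Finset.mem_univ _, Or.inl ⟨⟨i, rfl⟩, h⟩⟩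
      have hAB : v i ∈ KA ∨ v i ∈ KB := by
        rcases h01 (f (v i)) with h | h
        · exact Or.inl (Finset.mem_filter.mpr ⟨Finset.mem_univ _, h⟩)
        · exact Or.inr (Finset.mem_filter.mpr ⟨Finset.mem_univ _, h⟩)
      have c3 := hmemA K3 (v i) h3 (hv1 i)
      have c4 := hmemA K4 (v i) h4 (hv1 i)
      rcases hAB with h | h
      · have cA := hmemA KA (v i) h (hv1 i); omega
      · have cB := hmemA KB (v i) h (hv1 i); omega
    · -- class of size ≥ 2: one vertex on each side, and v i in K3 ∪ K4
      simp only [sing, not_forall] at hs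
      obtain ⟨w, hcw, hwne⟩ := hs
      have hcw' : c w = i := by rw [hcw, hv1]
      have hfne : f w ≠ f (v i) := by
        intro heq
        exact hInd w (v i) hcw (hAdj w (v i) hwne heq)
      have hABcard : 1 ≤ (KA.filter (fun u => c u = i)).card ∧
          1 ≤ (KB.filter (fun u => c u = i)).card := by
        rcases h01 (f (v i)) with h | h
        · have hw1 : f w = 1 := (h01 (f w)).resolve_left (fun h' => hfne (h'.trans h.symm))
          exact ⟨hmemA KA (v i) (Finset.mem_filter.mpr ⟨Finset.mem_univ _, h⟩) (hv1 i),
            hmemA KB w (Finset.mem_filter.mpr ⟨Finset.mem_univ _, hw1⟩) hcw'⟩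
        · have hw0 : f w = 0 := (h01 (f w)).resolve_right (fun h' => hfne (h'.trans h.symm))
          exact ⟨hmemA KA w (Finset.mem_filter.mpr ⟨Finset.mem_univ _, hw0⟩) hcw',
            hmemA KB (v i) (Finset.mem_filter.mpr ⟨Finset.mem_univ _, h⟩) (hv1 i)⟩
      have h34 : 1 ≤ (K3.filter (fun u => c u = i)).card ∨
          1 ≤ (K4.filter (fun u => c u = i)).card := by
        rcases h01 (f (v i)) with h | h
        · exact Or.inl (hmemA K3 (v i)
            (Finset.mem_filter.mpr ⟨Finset.mem_univ _, Or.inl ⟨⟨i, rfl⟩, h⟩⟩) (hv1 i))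
        · exact Or.inr (hmemA K4 (v i)
            (Finset.mem_filter.mpr ⟨Finset.mem_univ _, Or.inl ⟨⟨i, rfl⟩, h⟩⟩) (hv1 i))
      omega
  -- assemble
  have hsum : 3 * n ≤ KA.card + KB.card + K3.card + K4.card := by
    calc 3 * n = ∑ _i : Fin n, 3 := by simp [mul_comm]
    _ ≤ ∑ i : Fin n, ((KA.filter (fun u => c u = i)).card + (KB.filter (fun u => c u = i)).card
        + (K3.filter (fun u => c u = i)).card + (K4.filter (fun u => c u = i)).card) :=
      Finset.sum_le_sum (fun i _ => key i)
    _ = KA.card + KB.card + K3.card + K4.card := by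
      simp only [Finset.sum_add_distrib]
      rw [← classfib KA, ← classfib KB, ← classfib K3, ← classfib K4]
  have hA := @IsClique.card_le_cliqueNum _ G _ KA hcliqueA
  have hB := @IsClique.card_le_cliqueNum _ G _ KB hcliqueB
  have h3 := @IsClique.card_le_cliqueNum _ G _ K3 hclique3
  have h4 := @IsClique.card_le_cliqueNum _ G _ K4 hclique4
  omega
end

section
/- Let G be a finite simple graph that is the complement of a bipartite graph and let b be a positive integer. If G belongs to the family 𝒜_b, then the b-chromatic number of G satisfies φ(G) ≥ b. -/
open SimpleGraph

variable {V : Type*} [Fintype V] [DecidableEq V]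

/-- `G` (the complement of a bipartite graph) belongs to the family `𝒜_b` : it has a
bipartition `(X, Y)` into two cliques, partitions `X = A₁ ∪ B₁ ∪ C₁`, `Y = A₂ ∪ B₂ ∪ C₂`
such that every vertex of `A₁` is adjacent to every vertex of `A₂ ∪ B₂`, every vertex
of `A₂` is adjacent to every vertex of `C₁`, there are perfect anti-matchings (matchings
in the complement graph) between `B₁` and `B₂` and between `C₁` and `C₂`, and
`b = |X| + |A₂|`. -/
def InFamilyA (G : SimpleGraph V) (b : ℕ) : Prop :=
  ∃ X Y A₁ B₁ C₁ A₂ B₂ C₂ : Finset V,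
    Disjoint X Y ∧ X ∪ Y = Finset.univ ∧
    G.IsClique (X : Set V) ∧ G.IsClique (Y : Set V) ∧
    A₁ ∪ B₁ ∪ C₁ = X ∧ Disjoint A₁ B₁ ∧ Disjoint A₁ C₁ ∧ Disjoint B₁ C₁ ∧
    A₂ ∪ B₂ ∪ C₂ = Y ∧ Disjoint A₂ B₂ ∧ Disjoint A₂ C₂ ∧ Disjoint B₂ C₂ ∧
    (∀ u ∈ A₁, ∀ v ∈ A₂ ∪ B₂, G.Adj u v) ∧
    (∀ u ∈ A₂, ∀ v ∈ C₁, G.Adj u v) ∧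
    B₁.card = B₂.card ∧
    (∃ f : B₁ → B₂, Function.Bijective f ∧ ∀ u : B₁, Gᶜ.Adj (u : V) (f u : V)) ∧
    C₁.card = C₂.card ∧
    (∃ f : C₁ → C₂, Function.Bijective f ∧ ∀ u : C₁, Gᶜ.Adj (u : V) (f u : V)) ∧
    b = X.card + A₂.card

/-- Auxiliary coloring used in the proof: vertices of `X` get their own color,
vertices of `A₂` get a fresh color, vertices of `B₂` (resp. `C₂`) get the color of
their anti-matched partner in `B₁` (resp. `C₁`). -/
def familyColoring {V : Type*} [DecidableEq V] (X A₂ B₂ C₂ : Finset V) (b : ℕ) (hb : 0 < b)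
    (e : (↥X ⊕ ↥A₂) → Fin b) (pB : ↥B₂ → ↥X) (pC : ↥C₂ → ↥X) : V → Fin b := fun v =>
  if hX : v ∈ X then e (.inl ⟨v, hX⟩)
  else if hA : v ∈ A₂ then e (.inr ⟨v, hA⟩)
  else if hB : v ∈ B₂ then e (.inl (pB ⟨v, hB⟩))
  else if hC : v ∈ C₂ then e (.inl (pC ⟨v, hC⟩))
  else ⟨0, hb⟩

lemma familyColoring_memX {V : Type*} [DecidableEq V] {X A₂ B₂ C₂ : Finset V} {b : ℕ}
    {hb : 0 < b} {e : (↥X ⊕ ↥A₂) → Fin b} {pB : ↥B₂ → ↥X} {pC : ↥C₂ → ↥X} {v : V}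
    (h : v ∈ X) : familyColoring X A₂ B₂ C₂ b hb e pB pC v = e (.inl ⟨v, h⟩) :=
  dif_pos h

lemma familyColoring_memA {V : Type*} [DecidableEq V] {X A₂ B₂ C₂ : Finset V} {b : ℕ}
    {hb : 0 < b} {e : (↥X ⊕ ↥A₂) → Fin b} {pB : ↥B₂ → ↥X} {pC : ↥C₂ → ↥X} {v : V}
    (hX : v ∉ X) (h : v ∈ A₂) :
    familyColoring X A₂ B₂ C₂ b hb e pB pC v = e (.inr ⟨v, h⟩) := by
  unfold familyColoring; rw [dif_neg hX, dif_pos h]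

lemma familyColoring_memB {V : Type*} [DecidableEq V] {X A₂ B₂ C₂ : Finset V} {b : ℕ}
    {hb : 0 < b} {e : (↥X ⊕ ↥A₂) → Fin b} {pB : ↥B₂ → ↥X} {pC : ↥C₂ → ↥X} {v : V}
    (hX : v ∉ X) (hA : v ∉ A₂) (h : v ∈ B₂) :
    familyColoring X A₂ B₂ C₂ b hb e pB pC v = e (.inl (pB ⟨v, h⟩)) := by
  unfold familyColoring; rw [dif_neg hX, dif_neg hA, dif_pos h]

lemma familyColoring_memC {V : Type*} [DecidableEq V] {X A₂ B₂ C₂ : Finset V} {b : ℕ}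
    {hb : 0 < b} {e : (↥X ⊕ ↥A₂) → Fin b} {pB : ↥B₂ → ↥X} {pC : ↥C₂ → ↥X} {v : V}
    (hX : v ∉ X) (hA : v ∉ A₂) (hB : v ∉ B₂) (h : v ∈ C₂) :
    familyColoring X A₂ B₂ C₂ b hb e pB pC v = e (.inl (pC ⟨v, h⟩)) := by
  unfold familyColoring; rw [dif_neg hX, dif_neg hA, dif_neg hB, dif_pos h]

/-- If `G` is the complement of a bipartite graph and `G ∈ 𝒜_b` for a positive
integer `b`, then `φ(G) ≥ b`. -/
theorem bChromaticNumber_ge_of_inFamilyA (G : SimpleGraph V) (b : ℕ) (hb : 0 < b)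
    (hbip : Gᶜ.Colorable 2) (hA : InFamilyA G b) :
    b ≤ bChromaticNumber G := by
  classical
  obtain ⟨X, Y, A₁, B₁, C₁, A₂, B₂, C₂, hXY, hXYuniv, hXcl, hYcl,
    hX1, hA1B1, hA1C1, hB1C1, hY2, hA2B2, hA2C2, hB2C2,
    hA1adj, hA2C1, hBcard, ⟨fB, hfBbij, hfBanti⟩, hCcard, ⟨fC, hfCbij, hfCanti⟩, hbcard⟩ := hA
  have hA1X : A₁ ⊆ X := by
    rw [← hX1]; exact Finset.subset_union_left.trans Finset.subset_union_left
  have hB1X : B₁ ⊆ X := by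
    rw [← hX1]; exact Finset.subset_union_right.trans Finset.subset_union_left
  have hC1X : C₁ ⊆ X := by rw [← hX1]; exact Finset.subset_union_right
  have hA2Y : A₂ ⊆ Y := by
    rw [← hY2]; exact Finset.subset_union_left.trans Finset.subset_union_left
  have hB2Y : B₂ ⊆ Y := by
    rw [← hY2]; exact Finset.subset_union_right.trans Finset.subset_union_left
  have hC2Y : C₂ ⊆ Y := by rw [← hY2]; exact Finset.subset_union_right
  have hYnX : ∀ {v : V}, v ∈ Y → v ∉ X := fun hv hx => Finset.disjoint_left.mp hXY hx hv
  set eB : ↥B₁ ≃ ↥B₂ := Equiv.ofBijective fB hfBbij with heB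
  set eC : ↥C₁ ≃ ↥C₂ := Equiv.ofBijective fC hfCbij with heC
  set e : (↥X ⊕ ↥A₂) ≃ Fin b :=
    ((X.equivFin.sumCongr A₂.equivFin).trans finSumFinEquiv).trans (finCongr hbcard.symm)
    with he
  set pB : ↥B₂ → ↥X := fun v => ⟨(eB.symm v : V), hB1X (eB.symm v).2⟩ with hpB
  set pC : ↥C₂ → ↥X := fun v => ⟨(eC.symm v : V), hC1X (eC.symm v).2⟩ with hpC
  set c : V → Fin b := familyColoring X A₂ B₂ C₂ b hb (⇑e) pB pC with hc
  -- value lemmas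
  have hcX2 : ∀ (v : V) (h : v ∈ X), c v = e (.inl ⟨v, h⟩) := fun v h =>
    familyColoring_memX h
  have hcA2 : ∀ (v : V) (h : v ∈ A₂), c v = e (.inr ⟨v, h⟩) := fun v h =>
    familyColoring_memA (hYnX (hA2Y h)) h
  have hcB2 : ∀ (v : V) (h : v ∈ B₂), c v = e (.inl (pB ⟨v, h⟩)) := fun v h =>
    familyColoring_memB (hYnX (hB2Y h)) (fun ha => Finset.disjoint_left.mp hA2B2 ha h) h
  have hcC2 : ∀ (v : V) (h : v ∈ C₂), c v = e (.inl (pC ⟨v, h⟩)) := fun v h =>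
    familyColoring_memC (hYnX (hC2Y h)) (fun ha => Finset.disjoint_left.mp hA2C2 ha h)
      (fun hbm => Finset.disjoint_left.mp hB2C2 hbm h) h
  have hpBval : ∀ (u : ↥B₁), pB (fB u) = ⟨(u : V), hB1X u.2⟩ := by
    intro u
    have h1 : eB.symm (fB u) = u := eB.symm_apply_apply u
    simp only [hpB, h1]
  have hpCval : ∀ (u : ↥C₁), pC (fC u) = ⟨(u : V), hC1X u.2⟩ := by
    intro u
    have h1 : eC.symm (fC u) = u := eC.symm_apply_apply u
    simp only [hpC, h1]
  have hcB : ∀ (u : ↥B₁), c ↑(fB u) = e (.inl ⟨(u : V), hB1X u.2⟩) := by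
    intro u
    rw [hcB2 _ (fB u).2]
    congr 2
    rw [show (⟨((fB u : V)), (fB u).2⟩ : ↥B₂) = fB u from rfl, hpBval]
  have hcC : ∀ (u : ↥C₁), c ↑(fC u) = e (.inl ⟨(u : V), hC1X u.2⟩) := by
    intro u
    rw [hcC2 _ (fC u).2]
    congr 2
    rw [show (⟨((fC u : V)), (fC u).2⟩ : ↥C₂) = fC u from rfl, hpCval]
  have hantiB : ∀ (w : ↥B₂), Gᶜ.Adj ↑(eB.symm w) ↑w := by
    intro w
    have h := hfBanti (eB.symm w)
    rwa [show fB (eB.symm w) = w from eB.apply_symm_apply w] at h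
  have hantiC : ∀ (w : ↥C₂), Gᶜ.Adj ↑(eC.symm w) ↑w := by
    intro w
    have h := hfCanti (eC.symm w)
    rwa [show fC (eC.symm w) = w from eC.apply_symm_apply w] at h
  have hcover : ∀ v : V, v ∈ X ∨ v ∈ A₂ ∨ v ∈ B₂ ∨ v ∈ C₂ := by
    intro v
    have hv : v ∈ X ∪ Y := by rw [hXYuniv]; exact Finset.mem_univ v
    rcases Finset.mem_union.mp hv with h | h
    · exact Or.inl h
    · rw [← hY2] at h
      rcases Finset.mem_union.mp h with h | h
      · rcases Finset.mem_union.mp h with h | h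
        · exact Or.inr (Or.inl h)
        · exact Or.inr (Or.inr (Or.inl h))
      · exact Or.inr (Or.inr (Or.inr h))
  have hXadj : ∀ {u v : V}, u ∈ X → v ∈ X → u ≠ v → G.Adj u v := fun hu hv hne =>
    hXcl (Finset.mem_coe.mpr hu) (Finset.mem_coe.mpr hv) hne
  have hYadj : ∀ {u v : V}, u ∈ Y → v ∈ Y → u ≠ v → G.Adj u v := fun hu hv hne =>
    hYcl (Finset.mem_coe.mpr hu) (Finset.mem_coe.mpr hv) hne
  -- properness
  have hproper : ∀ v w, G.Adj v w → c v ≠ c w := by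
    intro v w hadj hceq
    rcases hcover v with hv | hv | hv | hv <;> rcases hcover w with hw | hw | hw | hw
    · rw [hcX2 v hv, hcX2 w hw] at hceq
      have := e.injective hceq
      simp only [Sum.inl.injEq, Subtype.mk.injEq] at this
      exact hadj.ne this
    · rw [hcX2 v hv, hcA2 w hw] at hceq
      simpa using e.injective hceq
    · rw [hcX2 v hv, hcB2 w hw] at hceq
      have h1 := e.injective hceq
      simp only [Sum.inl.injEq] at h1
      have h2 : v = ↑(eB.symm ⟨w, hw⟩) := congrArg Subtype.val h1
      have h3 := hantiB ⟨w, hw⟩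
      rw [← h2] at h3
      exact (compl_adj G v w).mp h3 |>.2 hadj
    · rw [hcX2 v hv, hcC2 w hw] at hceq
      have h1 := e.injective hceq
      simp only [Sum.inl.injEq] at h1
      have h2 : v = ↑(eC.symm ⟨w, hw⟩) := congrArg Subtype.val h1
      have h3 := hantiC ⟨w, hw⟩
      rw [← h2] at h3
      exact (compl_adj G v w).mp h3 |>.2 hadj
    · rw [hcA2 v hv, hcX2 w hw] at hceq
      simpa using e.injective hceq
    · rw [hcA2 v hv, hcA2 w hw] at hceq
      have := e.injective hceq
      simp only [Sum.inr.injEq, Subtype.mk.injEq] at this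
      exact hadj.ne this
    · rw [hcA2 v hv, hcB2 w hw] at hceq
      simpa using e.injective hceq
    · rw [hcA2 v hv, hcC2 w hw] at hceq
      simpa using e.injective hceq
    · rw [hcB2 v hv, hcX2 w hw] at hceq
      have h1 := e.injective hceq
      simp only [Sum.inl.injEq] at h1
      have h2 : w = ↑(eB.symm ⟨v, hv⟩) := (congrArg Subtype.val h1).symm
      have h3 := hantiB ⟨v, hv⟩
      rw [← h2] at h3
      exact (compl_adj G w v).mp h3 |>.2 hadj.symm
    · rw [hcB2 v hv, hcA2 w hw] at hceq
      simpa using e.injective hceq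
    · rw [hcB2 v hv, hcB2 w hw] at hceq
      have h1 := e.injective hceq
      simp only [Sum.inl.injEq, hpB, Subtype.mk.injEq] at h1
      have h3 : eB.symm ⟨v, hv⟩ = eB.symm ⟨w, hw⟩ := Subtype.ext h1
      have h4 : (⟨v, hv⟩ : ↥B₂) = ⟨w, hw⟩ := eB.symm.injective h3
      exact hadj.ne (congrArg Subtype.val h4)
    · rw [hcB2 v hv, hcC2 w hw] at hceq
      have h1 := e.injective hceq
      simp only [Sum.inl.injEq, hpB, hpC, Subtype.mk.injEq] at h1
      have h2 : (↑(eB.symm ⟨v, hv⟩) : V) ∈ C₁ := h1 ▸ (eC.symm ⟨w, hw⟩).2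
      exact Finset.disjoint_left.mp hB1C1 (eB.symm ⟨v, hv⟩).2 h2
    · rw [hcC2 v hv, hcX2 w hw] at hceq
      have h1 := e.injective hceq
      simp only [Sum.inl.injEq] at h1
      have h2 : w = ↑(eC.symm ⟨v, hv⟩) := (congrArg Subtype.val h1).symm
      have h3 := hantiC ⟨v, hv⟩
      rw [← h2] at h3
      exact (compl_adj G w v).mp h3 |>.2 hadj.symm
    · rw [hcC2 v hv, hcA2 w hw] at hceq
      simpa using e.injective hceq
    · rw [hcC2 v hv, hcB2 w hw] at hceq
      have h1 := e.injective hceq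
      simp only [Sum.inl.injEq, hpB, hpC, Subtype.mk.injEq] at h1
      have h2 : (↑(eB.symm ⟨w, hw⟩) : V) ∈ C₁ := h1 ▸ (eC.symm ⟨v, hv⟩).2
      exact Finset.disjoint_left.mp hB1C1 (eB.symm ⟨w, hw⟩).2 h2
    · rw [hcC2 v hv, hcC2 w hw] at hceq
      have h1 := e.injective hceq
      simp only [Sum.inl.injEq, hpC, Subtype.mk.injEq] at h1
      have h4 : (⟨v, hv⟩ : ↥C₂) = ⟨w, hw⟩ := eC.symm.injective (Subtype.ext h1)
      exact hadj.ne (congrArg Subtype.val h4)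
  -- helper: distinctness from distinct colors
  have hne' : ∀ {v w : V} {t : ↥X ⊕ ↥A₂}, c w = e t → e t ≠ c v → v ≠ w := by
    intro v w t hcw ht h
    exact ht (by rw [← hcw, h])
  -- domination helpers
  have hdomY : ∀ v, v ∈ A₂ ∪ B₂ → ∀ t : ↥X ⊕ ↥A₂, e t ≠ c v →
      ∃ w, G.Adj v w ∧ c w = e t := by
    intro v hvAB t ht
    have hvY : v ∈ Y := (Finset.union_subset hA2Y hB2Y) hvAB
    rcases t with x' | a'
    · have hx'X : (x' : V) ∈ A₁ ∪ B₁ ∪ C₁ := by rw [hX1]; exact x'.2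
      rcases Finset.mem_union.mp hx'X with hx' | hx'
      · rcases Finset.mem_union.mp hx' with hx' | hx'
        · refine ⟨↑x', (hA1adj ↑x' hx' v hvAB).symm, ?_⟩
          rw [hcX2 _ x'.2]
        · refine ⟨↑(fB ⟨↑x', hx'⟩), ?_, ?_⟩
          · have hcw : c ↑(fB ⟨(x' : V), hx'⟩) = e (.inl x') := hcB ⟨↑x', hx'⟩
            exact hYadj hvY (hB2Y (fB ⟨↑x', hx'⟩).2) (hne' hcw ht)
          · exact hcB ⟨↑x', hx'⟩
      · refine ⟨↑(fC ⟨↑x', hx'⟩), ?_, ?_⟩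
        · have hcw : c ↑(fC ⟨(x' : V), hx'⟩) = e (.inl x') := hcC ⟨↑x', hx'⟩
          exact hYadj hvY (hC2Y (fC ⟨↑x', hx'⟩).2) (hne' hcw ht)
        · exact hcC ⟨↑x', hx'⟩
    · have hcw : c ↑a' = e (.inr a') := hcA2 _ a'.2
      exact ⟨↑a', hYadj hvY (hA2Y a'.2) (hne' hcw ht), hcw⟩
  have hdomX : ∀ (x : ↥X), (∀ a' : ↥A₂, G.Adj ↑x ↑a') → ∀ t : ↥X ⊕ ↥A₂, e t ≠ c ↑x →
      ∃ w, G.Adj ↑x w ∧ c w = e t := by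
    intro x hadjA t ht
    rcases t with x' | a'
    · have hcw : c ↑x' = e (.inl x') := hcX2 _ x'.2
      exact ⟨↑x', hXadj x.2 x'.2 (hne' hcw ht), hcw⟩
    · exact ⟨↑a', hadjA a', hcA2 _ a'.2⟩
  -- domination
  have hdom : ∀ i : Fin b, ∃ v, c v = i ∧ ∀ j : Fin b, j ≠ c v →
      ∃ w, G.Adj v w ∧ c w = j := by
    intro i
    have hie : e (e.symm i) = i := e.apply_symm_apply i
    rcases hsi : e.symm i with x | a
    · rw [hsi] at hie
      have hxX : (x : V) ∈ A₁ ∪ B₁ ∪ C₁ := by rw [hX1]; exact x.2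
      rcases Finset.mem_union.mp hxX with hx | hx
      · rcases Finset.mem_union.mp hx with hx | hx
        · -- x ∈ A₁
          have hcv : c ↑x = i := (hcX2 _ x.2).trans hie
          refine ⟨↑x, hcv, fun j hj => ?_⟩
          obtain ⟨w, hw1, hw2⟩ := hdomX x
            (fun a' => hA1adj ↑x hx ↑a' (Finset.mem_union_left _ a'.2)) (e.symm j)
            (by rw [e.apply_symm_apply]; exact hj)
          exact ⟨w, hw1, by rw [hw2, e.apply_symm_apply]⟩
        · -- x ∈ B₁
          have hcv : c ↑(fB ⟨(x : V), hx⟩) = i := (hcB ⟨↑x, hx⟩).trans hie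
          refine ⟨_, hcv, fun j hj => ?_⟩
          obtain ⟨w, hw1, hw2⟩ := hdomY _ (Finset.mem_union_right _ (fB ⟨↑x, hx⟩).2)
            (e.symm j) (by rw [e.apply_symm_apply]; exact hj)
          exact ⟨w, hw1, by rw [hw2, e.apply_symm_apply]⟩
      · -- x ∈ C₁
        have hcv : c ↑x = i := (hcX2 _ x.2).trans hie
        refine ⟨↑x, hcv, fun j hj => ?_⟩
        obtain ⟨w, hw1, hw2⟩ := hdomX x
          (fun a' => (hA2C1 ↑a' a'.2 ↑x hx).symm) (e.symm j)
          (by rw [e.apply_symm_apply]; exact hj)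
        exact ⟨w, hw1, by rw [hw2, e.apply_symm_apply]⟩
    · rw [hsi] at hie
      have hcv : c ↑a = i := (hcA2 _ a.2).trans hie
      refine ⟨↑a, hcv, fun j hj => ?_⟩
      obtain ⟨w, hw1, hw2⟩ := hdomY ↑a (Finset.mem_union_left _ a.2) (e.symm j)
        (by rw [e.apply_symm_apply]; exact hj)
      exact ⟨w, hw1, by rw [hw2, e.apply_symm_apply]⟩
  have hmem : b ∈ {n | ∃ cc : V → Fin n, IsBColoring G n cc} := ⟨c, hproper, hdom⟩
  have hbdd : BddAbove {n | ∃ cc : V → Fin n, IsBColoring G n cc} := by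
    refine ⟨Fintype.card V, fun n hn => ?_⟩
    obtain ⟨cn, _, hdomn⟩ := hn
    have hsurj : Function.Surjective cn := fun i => (hdomn i).imp fun v hv => hv.1
    simpa using Fintype.card_le_of_surjective cn hsurj
  exact le_csSup hbdd hmem
end

section
/- Let G be a finite simple graph that is the complement of a bipartite graph and let b be a positive integer. Then G admits a b-coloring with exactly b colors if and only if G belongs to the family 𝒜_b. -/
open SimpleGraph

variable {V : Type*} [Fintype V] [DecidableEq V]

/-- If `G` is the complement of a bipartite graph and `b` is a positive integer, then `G`
admits a b-coloring with exactly `b` colors if and only if `G ∈ 𝒜_b`. -/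
theorem exists_bColoring_iff_inFamilyA (G : SimpleGraph V) (b : ℕ) (hb : 0 < b)
    (hbip : Gᶜ.Colorable 2) :
    (∃ c : V → Fin b, IsBColoring G b c) ↔ InFamilyA G b := by
  constructor
  · intro h

    classical
    obtain ⟨c, hprop, hdom⟩ := h
    obtain ⟨d⟩ := hbip
    set X : Finset V := Finset.univ.filter (fun v => d v = 0) with hXdef
    set Y : Finset V := Finset.univ.filter (fun v => d v ≠ 0) with hYdef
    have hmemX : ∀ v, v ∈ X ↔ d v = 0 := by intro v; simp [hXdef]
    have hmemY : ∀ v, v ∈ Y ↔ d v ≠ 0 := by intro v; simp [hYdef]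
    have hXY : Disjoint X Y := by
      rw [Finset.disjoint_left]
      intro v hv hv'
      exact (hmemY v).mp hv' ((hmemX v).mp hv)
    have hXYu : X ∪ Y = Finset.univ := by
      ext v
      simp only [Finset.mem_union, hmemX, hmemY, Finset.mem_univ, iff_true]
      exact em _
    have huniv : ∀ v : V, v ∈ X ∨ v ∈ Y := by
      intro v
      have : v ∈ X ∪ Y := hXYu ▸ Finset.mem_univ v
      exact Finset.mem_union.mp this
    have hfin2 : ∀ i : Fin 2, i ≠ 0 → i = 1 := by decide
    have hXcl : G.IsClique (X : Set V) := by
      intro v hv w hw hne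
      by_contra hna
      exact d.valid ((compl_adj G v w).mpr ⟨hne, hna⟩)
        (((hmemX v).mp hv).trans ((hmemX w).mp hw).symm)
    have hYcl : G.IsClique (Y : Set V) := by
      intro v hv w hw hne
      by_contra hna
      exact d.valid ((compl_adj G v w).mpr ⟨hne, hna⟩)
        ((hfin2 _ ((hmemY v).mp hv)).trans (hfin2 _ ((hmemY w).mp hw)).symm)
    have hinjX : ∀ v ∈ X, ∀ w ∈ X, c v = c w → v = w := by
      intro v hv w hw hcc
      by_contra hne
      exact hprop v w (hXcl (Finset.mem_coe.mpr hv) (Finset.mem_coe.mpr hw) hne) hcc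
    have hinjY : ∀ v ∈ Y, ∀ w ∈ Y, c v = c w → v = w := by
      intro v hv w hw hcc
      by_contra hne
      exact hprop v w (hYcl (Finset.mem_coe.mpr hv) (Finset.mem_coe.mpr hw) hne) hcc
    set A₁ : Finset V := X.filter (fun x => ∀ y ∈ Y, c y ≠ c x) with hA₁def
    set A₂ : Finset V := Y.filter (fun y => ∀ x ∈ X, c x ≠ c y) with hA₂def
    set P₁ : Finset V := X.filter (fun x => ∃ y ∈ Y, c y = c x) with hP₁def
    set C₁ : Finset V := P₁.filter (fun x => ∀ a ∈ A₂, G.Adj x a) with hC₁def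
    set B₁ : Finset V := P₁.filter (fun x => ¬ ∀ a ∈ A₂, G.Adj x a) with hB₁def
    set B₂ : Finset V := Y.filter (fun y => ∃ x ∈ B₁, c x = c y) with hB₂def
    set C₂ : Finset V := Y.filter (fun y => ∃ x ∈ C₁, c x = c y) with hC₂def
    have hA₁X : A₁ ⊆ X := Finset.filter_subset _ _
    have hP₁X : P₁ ⊆ X := Finset.filter_subset _ _
    have hB₁X : B₁ ⊆ X := (Finset.filter_subset _ _).trans hP₁X
    have hC₁X : C₁ ⊆ X := (Finset.filter_subset _ _).trans hP₁X
    have hA₂Y : A₂ ⊆ Y := Finset.filter_subset _ _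
    have hB₂Y : B₂ ⊆ Y := Finset.filter_subset _ _
    have hC₂Y : C₂ ⊆ Y := Finset.filter_subset _ _
    -- uniqueness of colors of A₁ and A₂ vertices
    have huniqA₁ : ∀ a ∈ A₁, ∀ w, c w = c a → w = a := by
      intro a ha w hw
      obtain ⟨haX, haP⟩ := Finset.mem_filter.mp ha
      rcases huniv w with h | h
      · exact hinjX w h a haX hw
      · exact absurd hw (haP w h)
    have huniqA₂ : ∀ a ∈ A₂, ∀ w, c w = c a → w = a := by
      intro a ha w hw
      obtain ⟨haY, haP⟩ := Finset.mem_filter.mp ha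
      rcases huniv w with h | h
      · exact absurd hw (haP w h)
      · exact hinjY w h a haY hw
    -- if the color of v occurs only at v, then v dominates
    have hdomuniq : ∀ v, (∀ w, c w = c v → w = v) →
        ∀ j : Fin b, j ≠ c v → ∃ w, G.Adj v w ∧ c w = j := by
      intro v hv
      obtain ⟨v', hv', hd⟩ := hdom (c v)
      have : v' = v := hv v' hv'
      rw [this] at hd
      exact hd
    -- a dominating vertex of X is adjacent to all of A₂
    have hXdomA₂ : ∀ x ∈ X, (∀ j : Fin b, j ≠ c x → ∃ w, G.Adj x w ∧ c w = j) →
        ∀ a ∈ A₂, G.Adj x a := by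
      intro x hx hd a ha
      have hne : c a ≠ c x := fun hcc =>
        (Finset.mem_filter.mp ha).2 x hx hcc.symm
      obtain ⟨w, hw, hwc⟩ := hd (c a) hne
      rw [huniqA₂ a ha w hwc] at hw
      exact hw
    -- every vertex of B₂ dominates
    have hdomB₂ : ∀ y ∈ B₂, ∀ j : Fin b, j ≠ c y → ∃ w, G.Adj y w ∧ c w = j := by
      intro y hy
      obtain ⟨hyY, x, hxB, hxc⟩ := Finset.mem_filter.mp hy
      obtain ⟨v', hv', hd⟩ := hdom (c y)
      rcases huniv v' with h | h
      · -- v' = x, so x dominates, contradicting x ∈ B₁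
        have hvx : v' = x := hinjX v' h x (hB₁X hxB) (hv'.trans hxc.symm)
        rw [hvx] at hd
        exact absurd (hXdomA₂ x (hB₁X hxB) hd) (Finset.mem_filter.mp hxB).2
      · have hvy : v' = y := hinjY v' h y hyY hv'
        rw [hvy] at hd
        exact hd
    -- condition (1)
    have had1 : ∀ u ∈ A₁, ∀ v ∈ A₂ ∪ B₂, G.Adj u v := by
      intro u hu v hv
      rcases Finset.mem_union.mp hv with h | h
      · exact hXdomA₂ u (hA₁X hu) (hdomuniq u (fun w hw => huniqA₁ u hu w hw)) v h
      · have hcne : c u ≠ c v := by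
          intro hcc
          exact (Finset.mem_filter.mp hu).2 v (hB₂Y h) hcc.symm
        obtain ⟨w, hw, hwc⟩ := hdomB₂ v h (c u) hcne
        rw [huniqA₁ u hu w hwc] at hw
        exact hw.symm
    -- condition (2)
    have had2 : ∀ u ∈ A₂, ∀ v ∈ C₁, G.Adj u v := by
      intro u hu v hv
      exact ((Finset.mem_filter.mp hv).2 u hu).symm
    -- partition of X
    have hXp : A₁ ∪ B₁ ∪ C₁ = X := by
      ext v
      simp only [Finset.mem_union]
      constructor
      · rintro ((h | h) | h)
        · exact hA₁X h
        · exact hB₁X h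
        · exact hC₁X h
      · intro hv
        by_cases hex : ∃ y ∈ Y, c y = c v
        · have hP : v ∈ P₁ := Finset.mem_filter.mpr ⟨hv, hex⟩
          by_cases hall : ∀ a ∈ A₂, G.Adj v a
          · exact Or.inr (Finset.mem_filter.mpr ⟨hP, hall⟩)
          · exact Or.inl (Or.inr (Finset.mem_filter.mpr ⟨hP, hall⟩))
        · push_neg at hex
          exact Or.inl (Or.inl (Finset.mem_filter.mpr ⟨hv, hex⟩))
    have hA₁P₁ : Disjoint A₁ P₁ := by
      rw [Finset.disjoint_left]
      intro v hv hv'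
      obtain ⟨y, hy, hyc⟩ := (Finset.mem_filter.mp hv').2
      exact (Finset.mem_filter.mp hv).2 y hy hyc
    have hA₁B₁ : Disjoint A₁ B₁ := hA₁P₁.mono_right (Finset.filter_subset _ _)
    have hA₁C₁ : Disjoint A₁ C₁ := hA₁P₁.mono_right (Finset.filter_subset _ _)
    have hB₁C₁ : Disjoint B₁ C₁ := by
      rw [Finset.disjoint_left]
      intro v hv hv'
      exact (Finset.mem_filter.mp hv).2 (Finset.mem_filter.mp hv').2
    -- partition of Y
    have hYp : A₂ ∪ B₂ ∪ C₂ = Y := by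
      ext v
      simp only [Finset.mem_union]
      constructor
      · rintro ((h | h) | h)
        · exact hA₂Y h
        · exact hB₂Y h
        · exact hC₂Y h
      · intro hv
        by_cases hex : ∀ x ∈ X, c x ≠ c v
        · exact Or.inl (Or.inl (Finset.mem_filter.mpr ⟨hv, hex⟩))
        · push_neg at hex
          obtain ⟨x, hx, hxc⟩ := hex
          have hP : x ∈ P₁ := Finset.mem_filter.mpr ⟨hx, v, hv, hxc.symm⟩
          by_cases hall : ∀ a ∈ A₂, G.Adj x a
          · exact Or.inr (Finset.mem_filter.mpr
              ⟨hv, x, Finset.mem_filter.mpr ⟨hP, hall⟩, hxc⟩)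
          · exact Or.inl (Or.inr (Finset.mem_filter.mpr
              ⟨hv, x, Finset.mem_filter.mpr ⟨hP, hall⟩, hxc⟩))
    have hA₂B₂ : Disjoint A₂ B₂ := by
      rw [Finset.disjoint_left]
      intro v hv hv'
      obtain ⟨x, hx, hxc⟩ := (Finset.mem_filter.mp hv').2
      exact (Finset.mem_filter.mp hv).2 x (hB₁X hx) hxc
    have hA₂C₂ : Disjoint A₂ C₂ := by
      rw [Finset.disjoint_left]
      intro v hv hv'
      obtain ⟨x, hx, hxc⟩ := (Finset.mem_filter.mp hv').2
      exact (Finset.mem_filter.mp hv).2 x (hC₁X hx) hxc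
    have hB₂C₂ : Disjoint B₂ C₂ := by
      rw [Finset.disjoint_left]
      intro v hv hv'
      obtain ⟨x, hx, hxc⟩ := (Finset.mem_filter.mp hv).2
      obtain ⟨x', hx', hxc'⟩ := (Finset.mem_filter.mp hv').2
      have : x = x' := hinjX x (hB₁X hx) x' (hC₁X hx') (hxc.trans hxc'.symm)
      rw [this] at hx
      exact Finset.disjoint_left.mp hB₁C₁ hx hx'
    -- the anti-matchings
    have hexB : ∀ x : ↥B₁, ∃! y, y ∈ B₂ ∧ c y = c (x : V) := by
      rintro ⟨x, hx⟩
      obtain ⟨y, hy, hyc⟩ := (Finset.mem_filter.mp ((Finset.filter_subset _ _) hx)).2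
      refine ⟨y, ⟨Finset.mem_filter.mpr ⟨hy, x, hx, hyc.symm⟩, hyc⟩, ?_⟩
      rintro y' ⟨hy', hyc'⟩
      exact hinjY y' (hB₂Y hy') y hy (hyc'.trans hyc.symm)
    have hexC : ∀ x : ↥C₁, ∃! y, y ∈ C₂ ∧ c y = c (x : V) := by
      rintro ⟨x, hx⟩
      obtain ⟨y, hy, hyc⟩ := (Finset.mem_filter.mp ((Finset.filter_subset _ _) hx)).2
      refine ⟨y, ⟨Finset.mem_filter.mpr ⟨hy, x, hx, hyc.symm⟩, hyc⟩, ?_⟩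
      rintro y' ⟨hy', hyc'⟩
      exact hinjY y' (hC₂Y hy') y hy (hyc'.trans hyc.symm)
    let fB : ↥B₁ → ↥B₂ := fun x => ⟨B₂.choose (fun y => c y = c (x : V)) (hexB x),
      Finset.choose_mem _ _ _⟩
    have hfBc : ∀ x : ↥B₁, c ((fB x : ↥B₂) : V) = c (x : V) := fun x =>
      Finset.choose_property (fun y => c y = c (x : V)) B₂ (hexB x)
    let fC : ↥C₁ → ↥C₂ := fun x => ⟨C₂.choose (fun y => c y = c (x : V)) (hexC x),
      Finset.choose_mem _ _ _⟩
    have hfCc : ∀ x : ↥C₁, c ((fC x : ↥C₂) : V) = c (x : V) := fun x =>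
      Finset.choose_property (fun y => c y = c (x : V)) C₂ (hexC x)
    have hfBbij : Function.Bijective fB := by
      constructor
      · intro x x' hxx
        have : c (x : V) = c ((x' : ↥B₁) : V) := by
          rw [← hfBc x, ← hfBc x', hxx]
        exact Subtype.ext (hinjX _ (hB₁X x.2) _ (hB₁X x'.2) this)
      · rintro ⟨y, hy⟩
        obtain ⟨hyY, x, hxB, hxc⟩ := Finset.mem_filter.mp hy
        refine ⟨⟨x, hxB⟩, Subtype.ext ?_⟩
        exact hinjY _ (hB₂Y (fB ⟨x, hxB⟩).2) y hyY ((hfBc ⟨x, hxB⟩).trans hxc)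
    have hfCbij : Function.Bijective fC := by
      constructor
      · intro x x' hxx
        have : c (x : V) = c ((x' : ↥C₁) : V) := by
          rw [← hfCc x, ← hfCc x', hxx]
        exact Subtype.ext (hinjX _ (hC₁X x.2) _ (hC₁X x'.2) this)
      · rintro ⟨y, hy⟩
        obtain ⟨hyY, x, hxC, hxc⟩ := Finset.mem_filter.mp hy
        refine ⟨⟨x, hxC⟩, Subtype.ext ?_⟩
        exact hinjY _ (hC₂Y (fC ⟨x, hxC⟩).2) y hyY ((hfCc ⟨x, hxC⟩).trans hxc)
    have hfBanti : ∀ x : ↥B₁, Gᶜ.Adj (x : V) ((fB x : ↥B₂) : V) := by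
      intro x
      rw [compl_adj]
      refine ⟨?_, ?_⟩
      · intro hcontra
        exact Finset.disjoint_left.mp hXY (hB₁X x.2)
          (hcontra ▸ hB₂Y (fB x).2)
      · intro hadj
        exact hprop _ _ hadj (hfBc x).symm
    have hfCanti : ∀ x : ↥C₁, Gᶜ.Adj (x : V) ((fC x : ↥C₂) : V) := by
      intro x
      rw [compl_adj]
      refine ⟨?_, ?_⟩
      · intro hcontra
        exact Finset.disjoint_left.mp hXY (hC₁X x.2)
          (hcontra ▸ hC₂Y (fC x).2)
      · intro hadj
        exact hprop _ _ hadj (hfCc x).symm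
    have hBcard : B₁.card = B₂.card := by
      have := Fintype.card_of_bijective hfBbij
      rwa [Fintype.card_coe, Fintype.card_coe] at this
    have hCcard : C₁.card = C₂.card := by
      have := Fintype.card_of_bijective hfCbij
      rwa [Fintype.card_coe, Fintype.card_coe] at this
    -- the count
    have hScount : X.image c ∪ A₂.image c = Finset.univ := by
      ext i
      simp only [Finset.mem_union, Finset.mem_image, Finset.mem_univ, iff_true]
      obtain ⟨v, hv, _⟩ := hdom i
      rcases huniv v with h | h
      · exact Or.inl ⟨v, h, hv⟩
      · by_cases hex : ∀ x ∈ X, c x ≠ c v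
        · exact Or.inr ⟨v, Finset.mem_filter.mpr ⟨h, hex⟩, hv⟩
        · push_neg at hex
          obtain ⟨x, hx, hxc⟩ := hex
          exact Or.inl ⟨x, hx, hxc.trans hv⟩
    have hSdisj : Disjoint (X.image c) (A₂.image c) := by
      rw [Finset.disjoint_left]
      intro i hi hi'
      obtain ⟨x, hx, hxc⟩ := Finset.mem_image.mp hi
      obtain ⟨a, ha, hac⟩ := Finset.mem_image.mp hi'
      exact (Finset.mem_filter.mp ha).2 x hx (hxc.trans hac.symm)
    have hbcard : b = X.card + A₂.card := by
      have h1 : (X.image c).card = X.card :=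
        Finset.card_image_of_injOn (fun v hv w hw => hinjX v hv w hw)
      have h2 : (A₂.image c).card = A₂.card :=
        Finset.card_image_of_injOn (fun v hv w hw =>
          hinjY v (hA₂Y hv) w (hA₂Y hw))
      calc b = Fintype.card (Fin b) := (Fintype.card_fin b).symm
        _ = (Finset.univ : Finset (Fin b)).card := rfl
        _ = (X.image c ∪ A₂.image c).card := by rw [hScount]
        _ = (X.image c).card + (A₂.image c).card :=
            Finset.card_union_of_disjoint hSdisj
        _ = X.card + A₂.card := by rw [h1, h2]
    exact ⟨X, Y, A₁, B₁, C₁, A₂, B₂, C₂, hXY, hXYu, hXcl, hYcl, hXp, hA₁B₁, hA₁C₁, hB₁C₁,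
      hYp, hA₂B₂, hA₂C₂, hB₂C₂, had1, had2, hBcard, ⟨fB, hfBbij, hfBanti⟩,
      hCcard, ⟨fC, hfCbij, hfCanti⟩, hbcard⟩
  · intro h

    classical
    obtain ⟨X, Y, A₁, B₁, C₁, A₂, B₂, C₂, hXY, hXYu, hXcl, hYcl, hXp, hA₁B₁, hA₁C₁, hB₁C₁,
      hYp, hA₂B₂, hA₂C₂, hB₂C₂, had1, had2, hBc, ⟨f, hf, hfa⟩, hCc, ⟨g, hg, hga⟩, hbc⟩ := h
    have hA₁X : A₁ ⊆ X := by rw [← hXp]; intro v hv; simp [hv]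
    have hB₁X : B₁ ⊆ X := by rw [← hXp]; intro v hv; simp [hv]
    have hC₁X : C₁ ⊆ X := by rw [← hXp]; intro v hv; simp [hv]
    have hA₂Y : A₂ ⊆ Y := by rw [← hYp]; intro v hv; simp [hv]
    have hB₂Y : B₂ ⊆ Y := by rw [← hYp]; intro v hv; simp [hv]
    have hC₂Y : C₂ ⊆ Y := by rw [← hYp]; intro v hv; simp [hv]
    have hdXA₂ : Disjoint X A₂ := hXY.mono_right hA₂Y
    have hdXB₂ : Disjoint X B₂ := hXY.mono_right hB₂Y
    have hdXC₂ : Disjoint X C₂ := hXY.mono_right hC₂Y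
    have hcard : (X ∪ A₂).card = b := by
      rw [Finset.card_union_of_disjoint hdXA₂]; omega
    let e : (↥(X ∪ A₂ : Finset V)) ≃ Fin b := (X ∪ A₂).equivFin.trans (finCongr hcard)
    let fe := Equiv.ofBijective f hf
    let ge := Equiv.ofBijective g hg
    let base : V → Fin b := fun v => if h : v ∈ X ∪ A₂ then e ⟨v, h⟩ else ⟨0, hb⟩
    let π : V → V := fun v =>
      if h : v ∈ B₂ then ((fe.symm ⟨v, h⟩ : ↥B₁) : V)
      else if h : v ∈ C₂ then ((ge.symm ⟨v, h⟩ : ↥C₁) : V)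
      else v
    set c : V → Fin b := fun v => base (π v) with hc
    -- basic facts about π
    have hπfix : ∀ v, v ∉ B₂ → v ∉ C₂ → π v = v := by
      intro v h1 h2; simp only [π, dif_neg h1, dif_neg h2]
    have hπB : ∀ v (h : v ∈ B₂), π v = ((fe.symm ⟨v, h⟩ : ↥B₁) : V) := by
      intro v h; simp only [π, dif_pos h]
    have hπC : ∀ v (h : v ∈ C₂), π v = ((ge.symm ⟨v, h⟩ : ↥C₁) : V) := by
      intro v h
      have hnb : v ∉ B₂ := Finset.disjoint_right.mp hB₂C₂ h
      simp only [π, dif_neg hnb, dif_pos h]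
    have hπcases : ∀ v, (π v = v ∧ (v ∈ X ∨ v ∈ A₂)) ∨
        (v ∈ B₂ ∧ π v ∈ B₁ ∧ Gᶜ.Adj (π v) v) ∨
        (v ∈ C₂ ∧ π v ∈ C₁ ∧ Gᶜ.Adj (π v) v) := by
      intro v
      by_cases h1 : v ∈ B₂
      · refine Or.inr (Or.inl ⟨h1, ?_, ?_⟩)
        · rw [hπB v h1]; exact (fe.symm ⟨v, h1⟩).2
        · have := hfa (fe.symm ⟨v, h1⟩)
          have h2 : f (fe.symm ⟨v, h1⟩) = ⟨v, h1⟩ := fe.apply_symm_apply ⟨v, h1⟩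
          rw [h2] at this
          rw [hπB v h1]; exact this
      · by_cases h2 : v ∈ C₂
        · refine Or.inr (Or.inr ⟨h2, ?_, ?_⟩)
          · rw [hπC v h2]; exact (ge.symm ⟨v, h2⟩).2
          · have := hga (ge.symm ⟨v, h2⟩)
            have h3 : g (ge.symm ⟨v, h2⟩) = ⟨v, h2⟩ := ge.apply_symm_apply ⟨v, h2⟩
            rw [h3] at this
            rw [hπC v h2]; exact this
        · refine Or.inl ⟨hπfix v h1 h2, ?_⟩
          have hv : v ∈ X ∪ Y := hXYu ▸ Finset.mem_univ v
          rcases Finset.mem_union.mp hv with hx | hy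
          · exact Or.inl hx
          · rw [← hYp] at hy
            rcases Finset.mem_union.mp hy with hy' | hy'
            · rcases Finset.mem_union.mp hy' with hy'' | hy''
              · exact Or.inr hy''
              · exact absurd hy'' h1
            · exact absurd hy' h2
    have hπmem : ∀ v, π v ∈ X ∪ A₂ := by
      intro v
      rcases hπcases v with ⟨he, hm⟩ | ⟨_, hm, _⟩ | ⟨_, hm, _⟩
      · rw [he]; rcases hm with hm | hm
        · exact Finset.mem_union_left _ hm
        · exact Finset.mem_union_right _ hm
      · exact Finset.mem_union_left _ (hB₁X hm)
      · exact Finset.mem_union_left _ (hC₁X hm)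
    have hbase_inj : ∀ v w, v ∈ X ∪ A₂ → w ∈ X ∪ A₂ → base v = base w → v = w := by
      intro v w hv hw hvw
      simp only [base, dif_pos hv, dif_pos hw] at hvw
      have := e.injective hvw
      exact congrArg Subtype.val this
    have hcfix : ∀ v, v ∈ X ∪ A₂ → c v = base v := by
      intro v hv
      have : π v = v := by
        rcases Finset.mem_union.mp hv with hx | ha
        · exact hπfix v (Finset.disjoint_left.mp hdXB₂ hx) (Finset.disjoint_left.mp hdXC₂ hx)
        · exact hπfix v (Finset.disjoint_left.mp hA₂B₂ ha) (Finset.disjoint_left.mp hA₂C₂ ha)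
      simp only [hc, this]
    have hcrep : ∀ z : ↥(X ∪ A₂ : Finset V), c ↑z = e z := by
      intro z
      rw [hcfix _ z.2]
      simp only [base, dif_pos z.2]
    have hcB : ∀ (x : ↥B₁), c ((f x : ↥B₂) : V) = c (x : V) := by
      intro x
      have hm : ((f x : ↥B₂) : V) ∈ B₂ := (f x).2
      have : π ((f x : ↥B₂) : V) = (x : V) := by
        rw [hπB _ hm]
        have : (⟨((f x : ↥B₂) : V), hm⟩ : ↥B₂) = f x := Subtype.ext rfl
        rw [this]
        have : fe.symm (f x) = x := fe.symm_apply_apply x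
        rw [this]
      rw [hc]
      simp only [this]
      rw [← hcfix _ (Finset.mem_union_left _ (hB₁X x.2))]
    have hcC : ∀ (x : ↥C₁), c ((g x : ↥C₂) : V) = c (x : V) := by
      intro x
      have hm : ((g x : ↥C₂) : V) ∈ C₂ := (g x).2
      have : π ((g x : ↥C₂) : V) = (x : V) := by
        rw [hπC _ hm]
        have : (⟨((g x : ↥C₂) : V), hm⟩ : ↥C₂) = g x := Subtype.ext rfl
        rw [this]
        have : ge.symm (g x) = x := ge.symm_apply_apply x
        rw [this]
      rw [hc]
      simp only [this]
      rw [← hcfix _ (Finset.mem_union_left _ (hC₁X x.2))]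
    refine ⟨c, ?_, ?_⟩
    · -- properness
      intro v w hadj hvw
      have hπeq : π v = π w := hbase_inj _ _ (hπmem v) (hπmem w) hvw
      rcases hπcases v with ⟨hev, _⟩ | ⟨hv2, hv1, hv3⟩ | ⟨hv2, hv1, hv3⟩ <;>
        rcases hπcases w with ⟨hew, _⟩ | ⟨hw2, hw1, hw3⟩ | ⟨hw2, hw1, hw3⟩
      · exact hadj.ne (hev ▸ hew ▸ hπeq)
      · rw [hev] at hπeq; rw [← hπeq] at hw3
        exact hw3.2 hadj
      · rw [hev] at hπeq; rw [← hπeq] at hw3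
        exact hw3.2 hadj
      · rw [hew] at hπeq; rw [hπeq] at hv3
        exact hv3.2 hadj.symm
      · -- both in B₂
        rw [hπB v hv2, hπB w hw2] at hπeq
        have : (⟨v, hv2⟩ : ↥B₂) = ⟨w, hw2⟩ :=
          fe.symm.injective (Subtype.ext hπeq)
        exact hadj.ne (congrArg Subtype.val this)
      · rw [hπeq] at hv1
        exact (Finset.disjoint_left.mp hB₁C₁ hv1) hw1
      · rw [hew] at hπeq; rw [hπeq] at hv3
        exact hv3.2 hadj.symm
      · rw [← hπeq] at hw1
        exact (Finset.disjoint_left.mp hB₁C₁ hw1) hv1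
      · rw [hπC v hv2, hπC w hw2] at hπeq
        have : (⟨v, hv2⟩ : ↥C₂) = ⟨w, hw2⟩ :=
          ge.symm.injective (Subtype.ext hπeq)
        exact hadj.ne (congrArg Subtype.val this)
    · -- b-domination
      intro i
      set u : ↥(X ∪ A₂ : Finset V) := e.symm i with hu
      have hci : c ↑u = i := by rw [hcrep u, hu, e.apply_symm_apply]
      -- helper: for every color j, the canonical representative
      have hrepne : ∀ j : Fin b, j ≠ i → ((e.symm j : ↥(X ∪ A₂ : Finset V)) : V) ≠ ↑u := by
        intro j hj hcontra
        exact hj (by rw [← e.apply_symm_apply j, ← e.apply_symm_apply i]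
                     exact congrArg e (Subtype.ext hcontra))
      have hYadj : ∀ y z : V, y ∈ Y → z ∈ Y → y ≠ z → G.Adj y z := by
        intro y z hy hz hne; exact hYcl (Finset.mem_coe.mpr hy) (Finset.mem_coe.mpr hz) hne
      have hXadj : ∀ y z : V, y ∈ X → z ∈ X → y ≠ z → G.Adj y z := by
        intro y z hy hz hne; exact hXcl (Finset.mem_coe.mpr hy) (Finset.mem_coe.mpr hz) hne
      have hmemcases : ∀ z : ↥(X ∪ A₂ : Finset V),
          (z : V) ∈ A₁ ∨ (z : V) ∈ B₁ ∨ (z : V) ∈ C₁ ∨ (z : V) ∈ A₂ := by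
        intro z
        rcases Finset.mem_union.mp z.2 with hx | ha
        · have hx2 : (z : V) ∈ A₁ ∪ B₁ ∪ C₁ := by rw [hXp]; exact hx
          rcases Finset.mem_union.mp hx2 with hx' | hx'
          · rcases Finset.mem_union.mp hx' with h | h
            · exact Or.inl h
            · exact Or.inr (Or.inl h)
          · exact Or.inr (Or.inr (Or.inl hx'))
        · exact Or.inr (Or.inr (Or.inr ha))
      -- the dominating vertex v₀ : in all cases it lies in Y iff needed; we handle cases
      rcases hmemcases u with hu1 | hu1 | hu1 | hu1
      · -- u ∈ A₁ : u itself dominates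
        refine ⟨↑u, hci, ?_⟩
        intro j hj
        rw [hci] at hj
        set u' := e.symm j with hu'
        have hne := hrepne j hj
        have hcj : c ↑u' = j := by rw [hcrep u', hu', e.apply_symm_apply]
        rcases Finset.mem_union.mp u'.2 with hx | ha
        · exact ⟨↑u', hXadj _ _ (hA₁X hu1) hx (Ne.symm hne), hcj⟩
        · exact ⟨↑u', had1 _ hu1 _ (Finset.mem_union_left _ ha), hcj⟩
      · -- u ∈ B₁ : the partner f u dominates
        refine ⟨((f ⟨↑u, hu1⟩ : ↥B₂) : V), by rw [hcB ⟨↑u, hu1⟩]; exact hci, ?_⟩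
        intro j hj
        rw [hcB ⟨↑u, hu1⟩, hci] at hj
        set u' := e.symm j with hu'
        have hne := hrepne j hj
        have hcj : c ↑u' = j := by rw [hcrep u', hu', e.apply_symm_apply]
        have hfm : ((f ⟨↑u, hu1⟩ : ↥B₂) : V) ∈ B₂ := (f _).2
        rcases hmemcases u' with h' | h' | h' | h'
        · -- u' ∈ A₁ : adjacency by condition 1
          exact ⟨↑u', (had1 _ h' _ (Finset.mem_union_right _ hfm)).symm, hcj⟩
        · -- u' ∈ B₁ : use partner f u'
          refine ⟨((f ⟨↑u', h'⟩ : ↥B₂) : V), ?_, by rw [hcB ⟨↑u', h'⟩]; exact hcj⟩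
          refine hYadj _ _ (hB₂Y hfm) (hB₂Y (f _).2) ?_
          intro hcontra
          have : (⟨(u : V), hu1⟩ : ↥B₁) = ⟨↑u', h'⟩ := hf.injective (Subtype.ext hcontra)
          exact hne (congrArg Subtype.val this).symm
        · -- u' ∈ C₁ : use partner g u'
          refine ⟨((g ⟨↑u', h'⟩ : ↥C₂) : V), ?_, by rw [hcC ⟨↑u', h'⟩]; exact hcj⟩
          refine hYadj _ _ (hB₂Y hfm) (hC₂Y (g _).2) ?_
          intro hcontra
          exact (Finset.disjoint_left.mp hB₂C₂ (hcontra ▸ hfm)) (g _).2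
        · -- u' ∈ A₂
          refine ⟨↑u', hYadj _ _ (hB₂Y hfm) (hA₂Y h') ?_, hcj⟩
          intro hcontra
          exact (Finset.disjoint_right.mp hA₂B₂ (hcontra ▸ hfm)) h'
      · -- u ∈ C₁ : u itself dominates
        refine ⟨↑u, hci, ?_⟩
        intro j hj
        rw [hci] at hj
        set u' := e.symm j with hu'
        have hne := hrepne j hj
        have hcj : c ↑u' = j := by rw [hcrep u', hu', e.apply_symm_apply]
        rcases Finset.mem_union.mp u'.2 with hx | ha
        · exact ⟨↑u', hXadj _ _ (hC₁X hu1) hx (Ne.symm hne), hcj⟩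
        · exact ⟨↑u', (had2 _ ha _ hu1).symm, hcj⟩
      · -- u ∈ A₂ : u itself dominates
        refine ⟨↑u, hci, ?_⟩
        intro j hj
        rw [hci] at hj
        set u' := e.symm j with hu'
        have hne := hrepne j hj
        have hcj : c ↑u' = j := by rw [hcrep u', hu', e.apply_symm_apply]
        rcases hmemcases u' with h' | h' | h' | h'
        · exact ⟨↑u', (had1 _ h' _ (Finset.mem_union_left _ hu1)).symm, hcj⟩
        · refine ⟨((f ⟨↑u', h'⟩ : ↥B₂) : V), ?_, by rw [hcB ⟨↑u', h'⟩]; exact hcj⟩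
          refine hYadj _ _ (hA₂Y hu1) (hB₂Y (f _).2) ?_
          intro hcontra
          exact (Finset.disjoint_left.mp hA₂B₂ (hcontra ▸ hu1)) (f _).2
        · exact ⟨↑u', had2 _ hu1 _ h', hcj⟩
        · refine ⟨↑u', hYadj _ _ (hA₂Y hu1) (hA₂Y h') (Ne.symm hne), hcj⟩
end

section
/- Let G be a finite simple graph that is the complement of a bipartite graph. Then the b-chromatic number of G satisfies φ(G) = b if and only if the maximum integer k such that G belongs to the family 𝒜_k equals b. -/
open SimpleGraph

variable {V : Type*} [Fintype V] [DecidableEq V]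

lemma bColoring_of_familyA (G : SimpleGraph V) (k : ℕ)
    (h : InFamilyA G k) : ∃ c : V → Fin k, IsBColoring G k c := by
  classical
  obtain ⟨X, Y, A₁, B₁, C₁, A₂, B₂, C₂, hXY, hXYu, hXc, hYc, hX, hA₁B₁, hA₁C₁, hB₁C₁,
    hY, hA₂B₂, hA₂C₂, hB₂C₂, hAdj1, hAdj2, hBcard, ⟨f, hfb, hfa⟩, hCcard, ⟨g, hgb, hga⟩, hk⟩ := h
  have hA₁X : A₁ ⊆ X := hX ▸ (Finset.subset_union_left.trans Finset.subset_union_left)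
  have hB₁X : B₁ ⊆ X := hX ▸ (Finset.subset_union_right.trans Finset.subset_union_left)
  have hC₁X : C₁ ⊆ X := hX ▸ Finset.subset_union_right
  have hA₂Y : A₂ ⊆ Y := hY ▸ (Finset.subset_union_left.trans Finset.subset_union_left)
  have hB₂Y : B₂ ⊆ Y := hY ▸ (Finset.subset_union_right.trans Finset.subset_union_left)
  have hC₂Y : C₂ ⊆ Y := hY ▸ Finset.subset_union_right
  have hXA₂ : Disjoint X A₂ := hXY.mono_right hA₂Y
  have hScard : (X ∪ A₂).card = k := by
    rw [Finset.card_union_of_disjoint hXA₂, hk]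
  have hScard' : Fintype.card ↥(X ∪ A₂) = k := by rw [Fintype.card_coe]; exact hScard
  let e : ↥(X ∪ A₂) ≃ Fin k := Fintype.equivFinOfCardEq hScard'
  let ef : ↥B₂ ≃ ↥B₁ := (Equiv.ofBijective f hfb).symm
  let eg : ↥C₂ ≃ ↥C₁ := (Equiv.ofBijective g hgb).symm
  let p : V → V := fun v =>
    if hv : v ∈ B₂ then (ef ⟨v, hv⟩ : V) else if hv : v ∈ C₂ then (eg ⟨v, hv⟩ : V) else v
  have hpB : ∀ v (hv : v ∈ B₂), p v = (ef ⟨v, hv⟩ : V) := by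
    intro v hv; simp only [p, dif_pos hv]
  have hpC : ∀ v (hv : v ∈ C₂), p v = (eg ⟨v, hv⟩ : V) := by
    intro v hv
    have hvB : v ∉ B₂ := fun hb => (Finset.disjoint_left.1 hB₂C₂) hb hv
    simp only [p, dif_neg hvB, dif_pos hv]
  have hpfix : ∀ v, v ∉ B₂ → v ∉ C₂ → p v = v := by
    intro v h1 h2; simp only [p, dif_neg h1, dif_neg h2]
  have hpfixX : ∀ v, v ∈ X ∪ A₂ → p v = v := by
    intro v hv
    rcases Finset.mem_union.1 hv with hv | hv
    · exact hpfix v (fun hb => (Finset.disjoint_left.1 hXY) hv (hB₂Y hb))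
        (fun hb => (Finset.disjoint_left.1 hXY) hv (hC₂Y hb))
    · exact hpfix v (fun hb => (Finset.disjoint_left.1 hA₂B₂) hv hb)
        (fun hb => (Finset.disjoint_left.1 hA₂C₂) hv hb)
  have hpmem : ∀ v, p v ∈ X ∪ A₂ := by
    intro v
    by_cases hv : v ∈ B₂
    · rw [hpB v hv]; exact Finset.mem_union_left _ (hB₁X (ef ⟨v, hv⟩).2)
    by_cases hv2 : v ∈ C₂
    · rw [hpC v hv2]; exact Finset.mem_union_left _ (hC₁X (eg ⟨v, hv2⟩).2)
    rw [hpfix v hv hv2]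
    have : v ∈ X ∪ Y := hXYu ▸ Finset.mem_univ v
    rcases Finset.mem_union.1 this with hvx | hvy
    · exact Finset.mem_union_left _ hvx
    · have : v ∈ A₂ ∪ B₂ ∪ C₂ := hY.symm ▸ hvy
      rcases Finset.mem_union.1 this with hv3 | hv3
      · rcases Finset.mem_union.1 hv3 with hv4 | hv4
        · exact Finset.mem_union_right _ hv4
        · exact absurd hv4 hv
      · exact absurd hv3 hv2
  let c : V → Fin k := fun v => e ⟨p v, hpmem v⟩
  -- inverse facts
  have hpf : ∀ x : ↥B₁, p (f x : V) = (x : V) := by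
    intro x
    have hfx : (f x : V) ∈ B₂ := (f x).2
    rw [hpB _ hfx]
    have : (⟨(f x : V), hfx⟩ : ↥B₂) = Equiv.ofBijective f hfb x := rfl
    rw [this, Equiv.symm_apply_apply]
  have hpg : ∀ x : ↥C₁, p (g x : V) = (x : V) := by
    intro x
    have hgx : (g x : V) ∈ C₂ := (g x).2
    rw [hpC _ hgx]
    have : (⟨(g x : V), hgx⟩ : ↥C₂) = Equiv.ofBijective g hgb x := rfl
    rw [this, Equiv.symm_apply_apply]
  have hpBadj : ∀ v (hv : v ∈ B₂), Gᶜ.Adj (p v) v := by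
    intro v hv
    have := hfa (ef ⟨v, hv⟩)
    have h2 : f (ef ⟨v, hv⟩) = ⟨v, hv⟩ := by
      show Equiv.ofBijective f hfb (ef ⟨v, hv⟩) = _
      simp [ef]
    rw [h2] at this
    rw [hpB v hv]; exact this
  have hpCadj : ∀ v (hv : v ∈ C₂), Gᶜ.Adj (p v) v := by
    intro v hv
    have := hga (eg ⟨v, hv⟩)
    have h2 : g (eg ⟨v, hv⟩) = ⟨v, hv⟩ := by
      show Equiv.ofBijective g hgb (eg ⟨v, hv⟩) = _
      simp [eg]
    rw [h2] at this
    rw [hpC v hv]; exact this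
  have hcp : ∀ v w, c v = c w → p v = p w := by
    intro v w hvw
    have := e.injective hvw
    exact congrArg Subtype.val this
  have symmcase : ∀ v w, v ∈ B₂ ∪ C₂ → w ∉ B₂ → w ∉ C₂ → p v = p w → Gᶜ.Adj v w := by
    intro v w hv hw1 hw2 hpw
    have hadj : Gᶜ.Adj (p v) v := by
      rcases Finset.mem_union.1 hv with h | h
      exacts [hpBadj v h, hpCadj v h]
    have hw : p v = w := by rw [hpw, hpfix w hw1 hw2]
    rw [hw] at hadj
    exact hadj.symm
  have hpkey : ∀ v w, p v = p w → v = w ∨ Gᶜ.Adj v w := by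
    intro v w hpw
    by_cases hv : v ∈ B₂ <;> by_cases hw : w ∈ B₂
    · left
      have h1 : (ef ⟨v, hv⟩ : V) = (ef ⟨w, hw⟩ : V) := by rw [← hpB v hv, ← hpB w hw, hpw]
      have h2 := ef.injective (Subtype.ext h1)
      exact congrArg Subtype.val h2
    · by_cases hw2 : w ∈ C₂
      · exfalso
        have h1 : p v ∈ B₁ := by rw [hpB v hv]; exact (ef ⟨v, hv⟩).2
        have h2 : p w ∈ C₁ := by rw [hpC w hw2]; exact (eg ⟨w, hw2⟩).2
        exact (Finset.disjoint_left.1 hB₁C₁) h1 (hpw ▸ h2)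
      · exact Or.inr (symmcase v w (Finset.mem_union_left _ hv) hw hw2 hpw)
    · by_cases hv2 : v ∈ C₂
      · exfalso
        have h1 : p w ∈ B₁ := by rw [hpB w hw]; exact (ef ⟨w, hw⟩).2
        have h2 : p v ∈ C₁ := by rw [hpC v hv2]; exact (eg ⟨v, hv2⟩).2
        exact (Finset.disjoint_left.1 hB₁C₁) h1 (hpw ▸ h2)
      · exact Or.inr (symmcase w v (Finset.mem_union_left _ hw) hv hv2 hpw.symm).symm
    · by_cases hv2 : v ∈ C₂ <;> by_cases hw2 : w ∈ C₂
      · left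
        have h1 : (eg ⟨v, hv2⟩ : V) = (eg ⟨w, hw2⟩ : V) := by rw [← hpC v hv2, ← hpC w hw2, hpw]
        have h2 := eg.injective (Subtype.ext h1)
        exact congrArg Subtype.val h2
      · exact Or.inr (symmcase v w (Finset.mem_union_right _ hv2) hw hw2 hpw)
      · exact Or.inr (symmcase w v (Finset.mem_union_right _ hw2) hv hv2 hpw.symm).symm
      · left; rw [← hpfix v hv hv2, ← hpfix w hw hw2, hpw]
  have hproper : ∀ v w, G.Adj v w → c v ≠ c w := by
    intro v w hadj hcv
    rcases hpkey v w (hcp v w hcv) with h | h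
    · exact G.irrefl (h ▸ hadj)
    · exact ((G.compl_adj (v := v) (w := w)).1 h).2 hadj
  have hcw : ∀ (j : Fin k) (w : V), p w = ((e.symm j : ↥(X ∪ A₂)) : V) → c w = j := by
    intro j w hpw
    show e ⟨p w, hpmem w⟩ = j
    have h1 : (⟨p w, hpmem w⟩ : ↥(X ∪ A₂)) = e.symm j := Subtype.ext hpw
    rw [h1, Equiv.apply_symm_apply]
  have hXadj : ∀ u v, u ∈ X → v ∈ X → u ≠ v → G.Adj u v := fun u v hu hv hne =>
    hXc (Finset.mem_coe.2 hu) (Finset.mem_coe.2 hv) hne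
  have hYadj : ∀ u v, u ∈ Y → v ∈ Y → u ≠ v → G.Adj u v := fun u v hu hv hne =>
    hYc (Finset.mem_coe.2 hu) (Finset.mem_coe.2 hv) hne
  refine ⟨c, hproper, ?_⟩
  intro i
  set u : V := ((e.symm i : ↥(X ∪ A₂)) : V) with hu_def
  have huS : u ∈ X ∪ A₂ := (e.symm i).2
  have hcu : c u = i := hcw i u (hpfixX u huS)
  -- facts about z = representative of color j
  have hz_spec : ∀ j : Fin k, j ≠ i →
      ∃ z, z ∈ X ∪ A₂ ∧ c z = j ∧ z ≠ u ∧ ∀ w, p w = z → c w = j := by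
    intro j hj
    refine ⟨((e.symm j : ↥(X ∪ A₂)) : V), (e.symm j).2, hcw j _ (hpfixX _ (e.symm j).2), ?_,
      fun w hw => hcw j w hw⟩
    intro hzu
    exact hj (by rw [← Equiv.apply_symm_apply e j, ← Equiv.apply_symm_apply e i,
      Subtype.ext hzu])
  rcases Finset.mem_union.1 huS with huX | huA₂
  · rw [← hX] at huX
    rcases Finset.mem_union.1 huX with huX' | huC₁
    · rcases Finset.mem_union.1 huX' with huA₁ | huB₁
      · -- u ∈ A₁ : u itself is the b-vertex
        refine ⟨u, hcu, ?_⟩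
        intro j hj
        rw [hcu] at hj
        obtain ⟨z, hzS, hzc, hzu, hze⟩ := hz_spec j hj
        rcases Finset.mem_union.1 hzS with hzX | hzA₂
        · exact ⟨z, hXadj u z (hA₁X huA₁) hzX (Ne.symm hzu), hzc⟩
        · exact ⟨z, hAdj1 u huA₁ z (Finset.mem_union_left _ hzA₂), hzc⟩
      · -- u ∈ B₁ : the partner f u ∈ B₂ is the b-vertex
        set v : V := ((f ⟨u, huB₁⟩ : ↥B₂) : V) with hv_def
        have hvB₂ : v ∈ B₂ := (f ⟨u, huB₁⟩).2
        have hcv : c v = i := hcw i v (by rw [hpf ⟨u, huB₁⟩])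
        refine ⟨v, hcv, ?_⟩
        intro j hj
        rw [hcv] at hj
        obtain ⟨z, hzS, hzc, hzu, hze⟩ := hz_spec j hj
        rcases Finset.mem_union.1 hzS with hzX | hzA₂
        · rw [← hX] at hzX
          rcases Finset.mem_union.1 hzX with hzX' | hzC₁
          · rcases Finset.mem_union.1 hzX' with hzA₁ | hzB₁
            · exact ⟨z, (hAdj1 z hzA₁ v (Finset.mem_union_right _ hvB₂)).symm, hzc⟩
            · refine ⟨((f ⟨z, hzB₁⟩ : ↥B₂) : V), ?_, hze _ (hpf ⟨z, hzB₁⟩)⟩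
              refine hYadj v _ (hB₂Y hvB₂) (hB₂Y (f ⟨z, hzB₁⟩).2) ?_
              intro hq
              exact hzu (congrArg Subtype.val (hfb.1 (Subtype.ext hq))).symm
          · refine ⟨((g ⟨z, hzC₁⟩ : ↥C₂) : V), ?_, hze _ (hpg ⟨z, hzC₁⟩)⟩
            refine hYadj v _ (hB₂Y hvB₂) (hC₂Y (g ⟨z, hzC₁⟩).2) ?_
            intro hq
            exact (Finset.disjoint_left.1 hB₂C₂) hvB₂ (hq ▸ (g ⟨z, hzC₁⟩).2)
        · refine ⟨z, hYadj v z (hB₂Y hvB₂) (hA₂Y hzA₂) ?_, hzc⟩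
          intro hq
          exact (Finset.disjoint_left.1 hA₂B₂) hzA₂ (hq ▸ hvB₂)
    · -- u ∈ C₁ : u itself is the b-vertex
      refine ⟨u, hcu, ?_⟩
      intro j hj
      rw [hcu] at hj
      obtain ⟨z, hzS, hzc, hzu, hze⟩ := hz_spec j hj
      rcases Finset.mem_union.1 hzS with hzX | hzA₂
      · exact ⟨z, hXadj u z (hC₁X huC₁) hzX (Ne.symm hzu), hzc⟩
      · exact ⟨z, (hAdj2 z hzA₂ u huC₁).symm, hzc⟩
  · -- u ∈ A₂ : u itself is the b-vertex
    refine ⟨u, hcu, ?_⟩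
    intro j hj
    rw [hcu] at hj
    obtain ⟨z, hzS, hzc, hzu, hze⟩ := hz_spec j hj
    rcases Finset.mem_union.1 hzS with hzX | hzA₂
    · rw [← hX] at hzX
      rcases Finset.mem_union.1 hzX with hzX' | hzC₁
      · rcases Finset.mem_union.1 hzX' with hzA₁ | hzB₁
        · exact ⟨z, (hAdj1 z hzA₁ u (Finset.mem_union_left _ huA₂)).symm, hzc⟩
        · refine ⟨((f ⟨z, hzB₁⟩ : ↥B₂) : V), ?_, hze _ (hpf ⟨z, hzB₁⟩)⟩
          refine hYadj u _ (hA₂Y huA₂) (hB₂Y (f ⟨z, hzB₁⟩).2) ?_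
          intro hq
          exact (Finset.disjoint_left.1 hA₂B₂) huA₂ (hq ▸ (f ⟨z, hzB₁⟩).2)
      · exact ⟨z, hAdj2 u huA₂ z hzC₁, hzc⟩
    · exact ⟨z, hYadj u z (hA₂Y huA₂) (hA₂Y hzA₂) (Ne.symm hzu), hzc⟩

lemma familyA_of_bColoring (G : SimpleGraph V) (k : ℕ) (hbip : Gᶜ.Colorable 2)
    (h : ∃ c : V → Fin k, IsBColoring G k c) : InFamilyA G k := by
  classical
  obtain ⟨c, hproper, hb⟩ := h
  obtain ⟨d⟩ := hbip
  set X : Finset V := Finset.univ.filter (fun v => d v = 0) with hXdef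
  set Y : Finset V := Finset.univ.filter (fun v => d v ≠ 0) with hYdef
  have hXmem : ∀ v, v ∈ X ↔ d v = 0 := by intro v; simp [hXdef]
  have hYmem : ∀ v, v ∈ Y ↔ d v ≠ 0 := by intro v; simp [hYdef]
  have hXY : Disjoint X Y := by
    rw [Finset.disjoint_left]; intro a ha hb2
    exact (hYmem a).1 hb2 ((hXmem a).1 ha)
  have hXYu : X ∪ Y = Finset.univ := by
    ext v
    simp only [Finset.mem_union, hXmem, hYmem, Finset.mem_univ, iff_true]
    exact em _
  have hVXY : ∀ v : V, v ∈ X ∨ v ∈ Y := by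
    intro v
    have : v ∈ X ∪ Y := hXYu ▸ Finset.mem_univ v
    exact Finset.mem_union.1 this
  have hXadj : ∀ u v, u ∈ X → v ∈ X → u ≠ v → G.Adj u v := by
    intro u v hu hv hne
    by_contra hadj
    exact d.valid ((G.compl_adj (v := u) (w := v)).2 ⟨hne, hadj⟩)
      (((hXmem u).1 hu).trans ((hXmem v).1 hv).symm)
  have hYadj : ∀ u v, u ∈ Y → v ∈ Y → u ≠ v → G.Adj u v := by
    intro u v hu hv hne
    by_contra hadj
    refine d.valid ((G.compl_adj (v := u) (w := v)).2 ⟨hne, hadj⟩) ?_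
    have h1 : (d u).val ≠ 0 := fun hh => (hYmem u).1 hu (Fin.ext hh)
    have h2 : (d v).val ≠ 0 := fun hh => (hYmem v).1 hv (Fin.ext hh)
    have h3 := (d u).isLt
    have h4 := (d v).isLt
    exact Fin.ext (by omega)
  have hXuniq : ∀ u v, u ∈ X → v ∈ X → c u = c v → u = v := by
    intro u v hu hv hc
    by_contra hne
    exact hproper u v (hXadj u v hu hv hne) hc
  have hYuniq : ∀ u v, u ∈ Y → v ∈ Y → c u = c v → u = v := by
    intro u v hu hv hc
    by_contra hne
    exact hproper u v (hYadj u v hu hv hne) hc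
  set bvert : V → Prop := fun x => ∀ j, j ≠ c x → ∃ w, G.Adj x w ∧ c w = j with hbvdef
  set A₁ : Finset V := X.filter (fun x => ∀ y ∈ Y, c y ≠ c x) with hA₁def
  set B₁ : Finset V := X.filter (fun x => (∃ y ∈ Y, c y = c x) ∧ ¬ bvert x) with hB₁def
  set C₁ : Finset V := X.filter (fun x => (∃ y ∈ Y, c y = c x) ∧ bvert x) with hC₁def
  set A₂ : Finset V := Y.filter (fun y => ∀ x ∈ X, c x ≠ c y) with hA₂def
  set B₂ : Finset V := Y.filter (fun y => ∃ x ∈ B₁, c x = c y) with hB₂def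
  set C₂ : Finset V := Y.filter (fun y => ∃ x ∈ C₁, c x = c y) with hC₂def
  have hA₁X : A₁ ⊆ X := Finset.filter_subset _ _
  have hB₁X : B₁ ⊆ X := Finset.filter_subset _ _
  have hC₁X : C₁ ⊆ X := Finset.filter_subset _ _
  have hA₂Y : A₂ ⊆ Y := Finset.filter_subset _ _
  have hB₂Y : B₂ ⊆ Y := Finset.filter_subset _ _
  have hC₂Y : C₂ ⊆ Y := Finset.filter_subset _ _
  -- b-vertex facts
  have hA₁bv : ∀ a ∈ A₁, bvert a := by
    intro a ha
    obtain ⟨haX, haP⟩ := Finset.mem_filter.1 ha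
    obtain ⟨v, hcv, hv⟩ := hb (c a)
    rcases hVXY v with hvX | hvY
    · have := hXuniq v a hvX haX hcv
      subst this
      intro j hj
      exact hv j (hcv ▸ hj)
    · exact absurd hcv (haP v hvY)
  have hA₂bv : ∀ a ∈ A₂, bvert a := by
    intro a ha
    obtain ⟨haY, haP⟩ := Finset.mem_filter.1 ha
    obtain ⟨v, hcv, hv⟩ := hb (c a)
    rcases hVXY v with hvX | hvY
    · exact absurd hcv (haP v hvX)
    · have := hYuniq v a hvY haY hcv
      subst this
      intro j hj
      exact hv j (hcv ▸ hj)
  have hB₂bv : ∀ y ∈ B₂, bvert y := by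
    intro y hy
    obtain ⟨hyY, x, hxB₁, hcxy⟩ := Finset.mem_filter.1 hy
    obtain ⟨hxX, _, hxnb⟩ := Finset.mem_filter.1 hxB₁
    obtain ⟨v, hcv, hv⟩ := hb (c y)
    rcases hVXY v with hvX | hvY
    · exfalso
      have hvx : v = x := hXuniq v x hvX hxX (hcv.trans hcxy.symm)
      subst hvx
      exact hxnb (fun j hj => hv j (hcv ▸ (hcxy ▸ hj)))
    · have := hYuniq v y hvY hyY hcv
      subst this
      intro j hj
      exact hv j (hcv ▸ hj)
  have hC₁bv : ∀ x ∈ C₁, bvert x := fun x hx => (Finset.mem_filter.1 hx).2.2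
  -- the adjacency conditions
  have hAdj1 : ∀ u ∈ A₁, ∀ v ∈ A₂ ∪ B₂, G.Adj u v := by
    intro u hu v hv
    obtain ⟨huX, huP⟩ := Finset.mem_filter.1 hu
    rcases Finset.mem_union.1 hv with hvA₂ | hvB₂
    · obtain ⟨hvY, hvP⟩ := Finset.mem_filter.1 hvA₂
      have hne : c v ≠ c u := huP v hvY
      obtain ⟨w, hw, hcw⟩ := hA₁bv u hu (c v) hne
      rcases hVXY w with hwX | hwY
      · exact absurd hcw (hvP w hwX)
      · have := hYuniq w v hwY hvY (hcw.trans (hYuniq v w hvY hwY hcw.symm ▸ rfl))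
        exact (hYuniq w v hwY hvY hcw) ▸ hw
    · have hvY := hB₂Y hvB₂
      have hne : c u ≠ c v := fun hh => huP v hvY hh.symm
      obtain ⟨w, hw, hcw⟩ := hB₂bv v hvB₂ (c u) hne
      rcases hVXY w with hwX | hwY
      · exact ((hXuniq w u hwX huX hcw) ▸ hw).symm
      · exact absurd hcw (huP w hwY)
  have hAdj2 : ∀ u ∈ A₂, ∀ v ∈ C₁, G.Adj u v := by
    intro u hu v hv
    obtain ⟨huY, huP⟩ := Finset.mem_filter.1 hu
    have hvX := hC₁X hv
    have hne : c u ≠ c v := fun hh => huP v hvX hh.symm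
    obtain ⟨w, hw, hcw⟩ := hC₁bv v hv (c u) hne
    rcases hVXY w with hwX | hwY
    · exact absurd hcw (huP w hwX)
    · exact ((hYuniq w u hwY huY hcw) ▸ hw).symm
  -- partitions
  have hXpart : A₁ ∪ B₁ ∪ C₁ = X := by
    ext x
    simp only [Finset.mem_union, hA₁def, hB₁def, hC₁def, Finset.mem_filter]
    constructor
    · rintro ((⟨hx, _⟩ | ⟨hx, _⟩) | ⟨hx, _⟩) <;> exact hx
    · intro hx
      by_cases hex : ∃ y ∈ Y, c y = c x
      · by_cases hbv : bvert x
        · exact Or.inr ⟨hx, hex, hbv⟩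
        · exact Or.inl (Or.inr ⟨hx, hex, hbv⟩)
      · exact Or.inl (Or.inl ⟨hx, fun y hy hc => hex ⟨y, hy, hc⟩⟩)
  have hYpart : A₂ ∪ B₂ ∪ C₂ = Y := by
    ext y
    simp only [Finset.mem_union, hA₂def, hB₂def, hC₂def, Finset.mem_filter]
    constructor
    · rintro ((⟨hy, _⟩ | ⟨hy, _⟩) | ⟨hy, _⟩) <;> exact hy
    · intro hy
      by_cases hex : ∃ x ∈ X, c x = c y
      · obtain ⟨x, hxX, hcx⟩ := hex
        by_cases hbv : bvert x
        · refine Or.inr ⟨hy, x, ?_, hcx⟩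
          exact Finset.mem_filter.2 ⟨hxX, ⟨y, hy, hcx.symm⟩, hbv⟩
        · refine Or.inl (Or.inr ⟨hy, x, ?_, hcx⟩)
          exact Finset.mem_filter.2 ⟨hxX, ⟨y, hy, hcx.symm⟩, hbv⟩
      · exact Or.inl (Or.inl ⟨hy, fun x hx hc => hex ⟨x, hx, hc⟩⟩)
  have hA₁B₁ : Disjoint A₁ B₁ := by
    rw [Finset.disjoint_left]
    intro a ha hb2
    obtain ⟨_, hP⟩ := Finset.mem_filter.1 ha
    obtain ⟨_, ⟨y, hy, hc⟩, _⟩ := Finset.mem_filter.1 hb2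
    exact hP y hy hc
  have hA₁C₁ : Disjoint A₁ C₁ := by
    rw [Finset.disjoint_left]
    intro a ha hb2
    obtain ⟨_, hP⟩ := Finset.mem_filter.1 ha
    obtain ⟨_, ⟨y, hy, hc⟩, _⟩ := Finset.mem_filter.1 hb2
    exact hP y hy hc
  have hB₁C₁ : Disjoint B₁ C₁ := by
    rw [Finset.disjoint_left]
    intro a ha hb2
    exact (Finset.mem_filter.1 ha).2.2 (Finset.mem_filter.1 hb2).2.2
  have hA₂B₂ : Disjoint A₂ B₂ := by
    rw [Finset.disjoint_left]
    intro a ha hb2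
    obtain ⟨_, hP⟩ := Finset.mem_filter.1 ha
    obtain ⟨_, x, hx, hc⟩ := Finset.mem_filter.1 hb2
    exact hP x (hB₁X hx) hc
  have hA₂C₂ : Disjoint A₂ C₂ := by
    rw [Finset.disjoint_left]
    intro a ha hb2
    obtain ⟨_, hP⟩ := Finset.mem_filter.1 ha
    obtain ⟨_, x, hx, hc⟩ := Finset.mem_filter.1 hb2
    exact hP x (hC₁X hx) hc
  have hB₂C₂ : Disjoint B₂ C₂ := by
    rw [Finset.disjoint_left]
    intro a ha hb2
    obtain ⟨_, x, hx, hc⟩ := Finset.mem_filter.1 ha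
    obtain ⟨_, x', hx', hc'⟩ := Finset.mem_filter.1 hb2
    have : x = x' := hXuniq x x' (hB₁X hx) (hC₁X hx') (hc.trans hc'.symm)
    exact Finset.disjoint_left.1 hB₁C₁ hx (this ▸ hx')
  -- anti-matchings
  have hmatch : ∀ (S₁ S₂ : Finset V), S₁ ⊆ X → S₂ ⊆ Y →
      (∀ x ∈ S₁, ∃ y ∈ S₂, c y = c x) → (∀ y ∈ S₂, ∃ x ∈ S₁, c x = c y) →
      ∃ f : S₁ → S₂, Function.Bijective f ∧ ∀ u : S₁, Gᶜ.Adj (u : V) (f u : V) := by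
    intro S₁ S₂ hS₁ hS₂ hex₁ hex₂
    have hch : ∀ x : ↥S₁, ∃ y, y ∈ S₂ ∧ c y = c (x : V) := by
      intro x
      obtain ⟨y, hy, hcy⟩ := hex₁ x x.2
      exact ⟨y, hy, hcy⟩
    choose F hF₁ hF₂ using hch
    refine ⟨fun x => ⟨F x, hF₁ x⟩, ⟨?_, ?_⟩, ?_⟩
    · intro x x' hxx
      have : c (x : V) = c (x' : V) := by
        rw [← hF₂ x, ← hF₂ x']
        exact congrArg c (congrArg Subtype.val hxx)
      exact Subtype.ext (hXuniq _ _ (hS₁ x.2) (hS₁ x'.2) this)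
    · intro y
      obtain ⟨x, hx, hcx⟩ := hex₂ y y.2
      refine ⟨⟨x, hx⟩, ?_⟩
      refine Subtype.ext (hYuniq _ _ (hS₂ (hF₁ ⟨x, hx⟩)) (hS₂ y.2) ?_)
      rw [hF₂ ⟨x, hx⟩]
      exact hcx
    · intro u
      refine (G.compl_adj (v := (u : V)) (w := F u)).2 ⟨?_, ?_⟩
      · intro hh
        exact Finset.disjoint_left.1 hXY (hS₁ u.2) (hh ▸ hS₂ (hF₁ u))
      · intro hadj
        exact hproper _ _ hadj (hF₂ u).symm
  have hcardeq : ∀ (S₁ S₂ : Finset V) (f : S₁ → S₂), Function.Bijective f →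
      S₁.card = S₂.card := by
    intro S₁ S₂ f hf
    rw [← Fintype.card_coe, ← Fintype.card_coe]
    exact Fintype.card_of_bijective hf
  have hBex₁ : ∀ x ∈ B₁, ∃ y ∈ B₂, c y = c x := by
    intro x hx
    obtain ⟨hxX, ⟨y, hyY, hcy⟩, hnb⟩ := Finset.mem_filter.1 hx
    exact ⟨y, Finset.mem_filter.2 ⟨hyY, x, hx, hcy.symm⟩, hcy⟩
  have hBex₂ : ∀ y ∈ B₂, ∃ x ∈ B₁, c x = c y := fun y hy => (Finset.mem_filter.1 hy).2
  have hCex₁ : ∀ x ∈ C₁, ∃ y ∈ C₂, c y = c x := by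
    intro x hx
    obtain ⟨hxX, ⟨y, hyY, hcy⟩, hnb⟩ := Finset.mem_filter.1 hx
    exact ⟨y, Finset.mem_filter.2 ⟨hyY, x, hx, hcy.symm⟩, hcy⟩
  have hCex₂ : ∀ y ∈ C₂, ∃ x ∈ C₁, c x = c y := fun y hy => (Finset.mem_filter.1 hy).2
  obtain ⟨fB, hfBbij, hfBadj⟩ := hmatch B₁ B₂ hB₁X hB₂Y hBex₁ hBex₂
  obtain ⟨fC, hfCbij, hfCadj⟩ := hmatch C₁ C₂ hC₁X hC₂Y hCex₁ hCex₂
  -- counting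
  have hDXA₂ : Disjoint X A₂ := hXY.mono_right hA₂Y
  have hinj : Set.InjOn c ↑(X ∪ A₂) := by
    intro u hu v hv hc
    rw [Finset.coe_union, Set.mem_union] at hu hv
    rcases hu with hu | hu <;> rcases hv with hv | hv <;>
      rw [Finset.mem_coe] at hu hv
    · exact hXuniq u v hu hv hc
    · exact absurd hc ((Finset.mem_filter.1 hv).2 u hu)
    · exact absurd hc.symm ((Finset.mem_filter.1 hu).2 v hv)
    · exact hYuniq u v (hA₂Y hu) (hA₂Y hv) hc
  have himg : (X ∪ A₂).image c = Finset.univ := by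
    apply Finset.eq_univ_of_forall
    intro i
    rw [Finset.mem_image]
    obtain ⟨v, hcv, hv⟩ := hb i
    by_cases hex : ∃ x ∈ X, c x = i
    · obtain ⟨x, hx, hcx⟩ := hex
      exact ⟨x, Finset.mem_union_left _ hx, hcx⟩
    · rcases hVXY v with hvX | hvY
      · exact absurd ⟨v, hvX, hcv⟩ hex
      · refine ⟨v, Finset.mem_union_right _ ?_, hcv⟩
        exact Finset.mem_filter.2 ⟨hvY, fun x hx hc => hex ⟨x, hx, hcv ▸ hc⟩⟩
  have hkcard : k = X.card + A₂.card := by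
    calc k = (Finset.univ : Finset (Fin k)).card := by simp
    _ = ((X ∪ A₂).image c).card := by rw [himg]
    _ = (X ∪ A₂).card := Finset.card_image_of_injOn hinj
    _ = X.card + A₂.card := Finset.card_union_of_disjoint hDXA₂
  exact ⟨X, Y, A₁, B₁, C₁, A₂, B₂, C₂, hXY, hXYu,
    fun u hu v hv hne => hXadj u v hu hv hne,
    fun u hu v hv hne => hYadj u v hu hv hne,
    hXpart, hA₁B₁, hA₁C₁, hB₁C₁, hYpart, hA₂B₂, hA₂C₂, hB₂C₂, hAdj1, hAdj2,
    hcardeq B₁ B₂ fB hfBbij, ⟨fB, hfBbij, hfBadj⟩,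
    hcardeq C₁ C₂ fC hfCbij, ⟨fC, hfCbij, hfCadj⟩, hkcard⟩

/-- If `G` is the complement of a bipartite graph, then `φ(G) = b` if and only if the
maximum integer `k` such that `G ∈ 𝒜_k` equals `b`. -/
theorem bChromaticNumber_eq_iff_sSup_familyA_eq (G : SimpleGraph V) (b : ℕ)
    (hbip : Gᶜ.Colorable 2) :
    bChromaticNumber G = b ↔ sSup {k | InFamilyA G k} = b := by
  have hset : {b | ∃ c : V → Fin b, IsBColoring G b c} = {k | InFamilyA G k} :=
    Set.ext fun k => ⟨familyA_of_bColoring G k hbip, bColoring_of_familyA G k⟩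
  unfold bChromaticNumber
  rw [hset]
end
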